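/- arXiv:2205.12681 — 6 statements merged into one kernel-verified Lean document; each statement's English description precedes it below -/
import Mathlib

section
/- Let $N$ be a $(p+q+1)\times(p+q+1)$ matrix over a commutative ring with block form $N = \begin{pmatrix} B & 0 \\ C & A\end{pmatrix}$, where $B$ is $q \times (q+1)$, $C$ is $(p+1)\times(q+1)$, $A$ is $(p+1)\times p$, and the zero block is $q\times p$. Then $\det(N) = \sum_{a=1}^{p+1}\sum_{b=1}^{q+1} (-1)^{q+a+b} C_{a,b}\det(A_{\hat a})\det(B^{\hat b})$, where $A_{\hat a}$ denotes $A$ with row $a$ removed and $B^{\hat b}$ denotes $B$ with column $b$ removed. -/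
/-!
Expanding along the first row, which lies in the `B`-block, reduces `q` by one: the entries of
that row vanish in the zero block, and deleting the row and the `b`-th column leaves a matrix of
the same shape. By induction this expands `det N` along its last `p` columns,
`det N = ∑ a, (-1)^a det(A_â) det [B; C_a]`, where `[B; C_a]` is `B` with row `a` of `C` appended;
the induction step closes because the first-row expansion of `[B; C_a]` is the same sum over `b`.
Expanding each `det [B; C_a]` along its last row gives the double sum.
-/

open Matrix

section FinSum

variable {m n k : ℕ}

theorem finSumFinEquiv_trans_finCongr_sum_map_succ (h : m + n = k) (h' : m + 1 + n = k + 1)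
    (s : Fin m ⊕ Fin n) :
    finSumFinEquiv.trans (finCongr h') (Sum.map Fin.succ id s) =
      (finSumFinEquiv.trans (finCongr h) s).succ := by
  ext
  rcases s with i | i <;> simp
  omega

theorem finSumFinEquiv_trans_finCongr_sum_map_succAbove (h : m + n = k)
    (h' : m + 1 + n = k + 1) (b : Fin (m + 1)) (s : Fin m ⊕ Fin n) :
    finSumFinEquiv.trans (finCongr h') (Sum.map b.succAbove id s) =
      (finSumFinEquiv.trans (finCongr h') (.inl b)).succAbove
        (finSumFinEquiv.trans (finCongr h) s) := by
  ext
  rcases s with i | i <;> simp [Fin.succAbove, Fin.lt_def] <;> split_ifs <;> simp <;> omega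

theorem finSumFinEquiv_trans_finCongr_symm_zero (h : m + 1 + n = k + 1) :
    (finSumFinEquiv.trans (finCongr h)).symm 0 = .inl 0 := by
  rw [Equiv.symm_apply_eq]
  ext
  simp

end FinSum

namespace Matrix

variable {α : Type*}

theorem fromBlocks_submatrix_sum_map {l₁ l₂ m₁ m₂ n₁ n₂ o₁ o₂ : Type*}
    (A : Matrix n₂ l₂ α) (B : Matrix n₂ m₂ α) (C : Matrix o₂ l₂ α) (D : Matrix o₂ m₂ α)
    (f : n₁ → n₂) (g : o₁ → o₂) (h : l₁ → l₂) (k : m₁ → m₂) :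
    (fromBlocks A B C D).submatrix (Sum.map f g) (Sum.map h k) =
      fromBlocks (A.submatrix f h) (B.submatrix f k) (C.submatrix g h) (D.submatrix g k) := by
  ext (i | i) (j | j) <;> rfl

theorem submatrix_succ_succAbove_reindex {m₁ n₁ m₂ n₂ k : ℕ} (h₁ : m₁ + n₁ = k)
    (h₁' : m₁ + 1 + n₁ = k + 1) (h₂ : m₂ + n₂ = k) (h₂' : m₂ + 1 + n₂ = k + 1)
    (M : Matrix (Fin (m₁ + 1) ⊕ Fin n₁) (Fin (m₂ + 1) ⊕ Fin n₂) α) (b : Fin (m₂ + 1)) :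
    (reindex (finSumFinEquiv.trans (finCongr h₁')) (finSumFinEquiv.trans (finCongr h₂'))
        M).submatrix Fin.succ (finSumFinEquiv.trans (finCongr h₂') (.inl b)).succAbove =
      reindex (finSumFinEquiv.trans (finCongr h₁)) (finSumFinEquiv.trans (finCongr h₂))
        (M.submatrix (Sum.map Fin.succ id) (Sum.map b.succAbove id)) := by
  ext i j
  simp only [reindex_apply, submatrix_apply]
  congr 1
  · rw [Equiv.symm_apply_eq, finSumFinEquiv_trans_finCongr_sum_map_succ h₁,
      Equiv.apply_symm_apply]
  · rw [Equiv.symm_apply_eq, finSumFinEquiv_trans_finCongr_sum_map_succAbove h₂,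
      Equiv.apply_symm_apply]

theorem submatrix_succ_succAbove_of_snoc {q n : ℕ} (B : Matrix (Fin (q + 1)) (Fin (n + 1)) α)
    (c : Fin (n + 1) → α) (b : Fin (n + 1)) :
    (of (Fin.snoc (of.symm B) c)).submatrix Fin.succ b.succAbove =
      of (Fin.snoc (of.symm (B.submatrix Fin.succ b.succAbove)) (c ∘ b.succAbove)) := by
  ext i j
  refine Fin.lastCases ?_ (fun i ↦ ?_) i
  · simp [Fin.succ_last]
  · simp [Fin.succ_castSucc, -Fin.castSucc_succ]

def finFromBlocksZero₁₂ {p q : ℕ} [Zero α] (B : Matrix (Fin q) (Fin (q + 1)) α)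
    (C : Matrix (Fin (p + 1)) (Fin (q + 1)) α) (A : Matrix (Fin (p + 1)) (Fin p) α) :
    Matrix (Fin (p + q + 1)) (Fin (p + q + 1)) α :=
  reindex (finSumFinEquiv.trans (finCongr (by omega : q + (p + 1) = p + (q + 1))))
    (finSumFinEquiv.trans (finCongr (by omega : q + 1 + p = p + (q + 1)))) (fromBlocks B 0 C A)

variable {R : Type*} [CommRing R]

theorem det_of_snoc {q : ℕ} (B : Matrix (Fin q) (Fin (q + 1)) R) (c : Fin (q + 1) → R) :
    (of (Fin.snoc (of.symm B) c)).det =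
      ∑ b : Fin (q + 1), (-1 : R) ^ (q + (b : ℕ)) * c b * (B.submatrix id b.succAbove).det := by
  rw [det_succ_row _ (Fin.last q)]
  refine Finset.sum_congr rfl fun b _ ↦ ?_
  have hminor : (of (Fin.snoc (of.symm B) c)).submatrix Fin.castSucc b.succAbove =
      B.submatrix id b.succAbove := by
    ext i j
    simp
  simp [Fin.succAbove_last, hminor]

theorem det_finFromBlocksZero₁₂_fin_zero {p : ℕ} (B : Matrix (Fin 0) (Fin 1) R)
    (C : Matrix (Fin (p + 1)) (Fin 1) R) (A : Matrix (Fin (p + 1)) (Fin p) R) :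
    (finFromBlocksZero₁₂ B C A).det =
      ∑ a : Fin (p + 1), (-1 : R) ^ (a : ℕ) * C a 0 * (A.submatrix a.succAbove id).det := by
  unfold finFromBlocksZero₁₂
  set e₁ : Fin 0 ⊕ Fin (p + 1) ≃ Fin (p + 0 + 1) := finSumFinEquiv.trans (finCongr (by omega))
  set e₂ : Fin 1 ⊕ Fin p ≃ Fin (p + 0 + 1) := finSumFinEquiv.trans (finCongr (by omega))
  have hrow : ∀ x, e₁.symm x = .inr x := fun x ↦ by
    rw [Equiv.symm_apply_eq]
    ext
    simp [e₁]
  have hcol : ∀ j : Fin p, e₂.symm j.succ = .inr j := fun j ↦ by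
    rw [Equiv.symm_apply_eq]
    ext
    simp [e₂]
  have hminor : ∀ a : Fin (p + 1),
      (reindex e₁ e₂ (fromBlocks B 0 C A)).submatrix a.succAbove Fin.succ =
        A.submatrix a.succAbove id := fun a ↦ by
    ext i j
    simp [hrow, hcol]
  rw [det_succ_column_zero]
  refine Finset.sum_congr rfl fun a _ ↦ ?_
  rw [hminor, reindex_apply, submatrix_apply, hrow,
    finSumFinEquiv_trans_finCongr_symm_zero]
  rfl

theorem det_finFromBlocksZero₁₂_fin_succ {p q : ℕ} (B : Matrix (Fin (q + 1)) (Fin (q + 2)) R)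
    (C : Matrix (Fin (p + 1)) (Fin (q + 2)) R) (A : Matrix (Fin (p + 1)) (Fin p) R) :
    (finFromBlocksZero₁₂ B C A).det =
      ∑ b : Fin (q + 2), (-1 : R) ^ (b : ℕ) * B 0 b *
        (finFromBlocksZero₁₂ (B.submatrix Fin.succ b.succAbove) (C.submatrix id b.succAbove)
          A).det := by
  set e₁ : Fin (q + 1) ⊕ Fin (p + 1) ≃ Fin (p + (q + 1) + 1) :=
    finSumFinEquiv.trans (finCongr (by omega))
  set e₂ : Fin (q + 2) ⊕ Fin p ≃ Fin (p + (q + 1) + 1) :=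
    finSumFinEquiv.trans (finCongr (by omega))
  set N := reindex e₁ e₂ (fromBlocks B 0 C A)
  have hval : ∀ b, ((e₂ (.inl b) : Fin _) : ℕ) = b := by simp [e₂]
  have hentry : ∀ b, N 0 (e₂ (.inl b)) = B 0 b := fun b ↦ by
    simp only [N, reindex_apply, submatrix_apply, e₁,
      Equiv.symm_apply_apply, finSumFinEquiv_trans_finCongr_symm_zero, fromBlocks_apply₁₁]
  have hzero : ∀ k, N 0 (e₂ (.inr k)) = 0 := fun k ↦ by
    simp only [N, reindex_apply, submatrix_apply, e₁,
      Equiv.symm_apply_apply, finSumFinEquiv_trans_finCongr_symm_zero, fromBlocks_apply₁₂,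
      zero_apply]
  have hminor : ∀ b, N.submatrix Fin.succ (e₂ (.inl b)).succAbove =
      finFromBlocksZero₁₂ (B.submatrix Fin.succ b.succAbove) (C.submatrix id b.succAbove) A :=
    fun b ↦ by
      rw [submatrix_succ_succAbove_reindex (by omega) _ (by omega), fromBlocks_submatrix_sum_map]
      rfl
  rw [show finFromBlocksZero₁₂ B C A = N from rfl, det_succ_row_zero, ← e₂.sum_comp,
    Fintype.sum_sum_type]
  simp [hval, hentry, hzero, hminor]

theorem det_finFromBlocksZero₁₂_eq_sum_det_snoc (p q : ℕ)
    (B : Matrix (Fin q) (Fin (q + 1)) R) (C : Matrix (Fin (p + 1)) (Fin (q + 1)) R)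
    (A : Matrix (Fin (p + 1)) (Fin p) R) :
    (finFromBlocksZero₁₂ B C A).det =
      ∑ a : Fin (p + 1), (-1 : R) ^ (a : ℕ) * (A.submatrix a.succAbove id).det *
        (of (Fin.snoc (of.symm B) (C a))).det := by
  induction q with
  | zero =>
    rw [det_finFromBlocksZero₁₂_fin_zero]
    refine Finset.sum_congr rfl fun a _ ↦ ?_
    rw [det_fin_one, of_apply, Fin.snoc_zero]
    ring
  | succ q ih =>
    calc (finFromBlocksZero₁₂ B C A).det
        = ∑ a : Fin (p + 1), (-1 : R) ^ (a : ℕ) * (A.submatrix a.succAbove id).det *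
            ∑ b : Fin (q + 2), (-1 : R) ^ (b : ℕ) * B 0 b *
              ((of (Fin.snoc (of.symm B) (C a))).submatrix Fin.succ b.succAbove).det := by
          have hCrow : ∀ (b : Fin (q + 2)) a, C.submatrix id b.succAbove a = C a ∘ b.succAbove :=
            fun _ _ ↦ rfl
          simp_rw [det_finFromBlocksZero₁₂_fin_succ, ih, submatrix_succ_succAbove_of_snoc, hCrow,
            Finset.mul_sum]
          rw [Finset.sum_comm]
          refine Finset.sum_congr rfl fun a _ ↦ Finset.sum_congr rfl fun b _ ↦ ?_
          ring
      _ = _ := by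
          refine Finset.sum_congr rfl fun a _ ↦ ?_
          rw [det_succ_row_zero]
          simp

end Matrix

/-- Block determinant expansion: for an `(p+q+1) × (p+q+1)` matrix with block form
`[[B, 0], [C, A]]` where `B` is `q × (q+1)`, `C` is `(p+1) × (q+1)`, `A` is `(p+1) × p`,
the determinant expands as a double sum over entries of `C` times complementary minors. -/
theorem block_det_expansion (p q : ℕ) (R : Type*) [CommRing R]
    (B : Matrix (Fin q) (Fin (q + 1)) R)
    (C : Matrix (Fin (p + 1)) (Fin (q + 1)) R)
    (A : Matrix (Fin (p + 1)) (Fin p) R)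
    (N : Matrix (Fin (p + q + 1)) (Fin (p + q + 1)) R)
    (hN : N = Matrix.reindex
      (finSumFinEquiv.trans (finCongr (by omega : q + (p + 1) = p + q + 1)))
      (finSumFinEquiv.trans (finCongr (by omega : (q + 1) + p = p + q + 1)))
      (Matrix.fromBlocks B 0 C A)) :
    N.det = ∑ a : Fin (p + 1), ∑ b : Fin (q + 1),
      (-1 : R) ^ (q + (a : ℕ) + (b : ℕ)) * C a b *
        (A.submatrix a.succAbove id).det * (B.submatrix id b.succAbove).det := by
  have hN' : N = finFromBlocksZero₁₂ B C A := hN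
  rw [hN', det_finFromBlocksZero₁₂_eq_sum_det_snoc]
  refine Finset.sum_congr rfl fun a _ ↦ ?_
  rw [det_of_snoc, Finset.mul_sum]
  refine Finset.sum_congr rfl fun b _ ↦ ?_
  ring
end

section
/- Let $K \subseteq L$ be fields and let $X = \{x_1,\dots,x_a\}$, $Y = \{y_1,\dots,y_b\}$, $Z = \{z_1,\dots,z_c\}$ be pairwise disjoint finite subsets of $L$ such that $X \cup Y \cup Z$ is algebraically independent over $K$. Let $F = \{f_1,\dots,f_a\}$ with each $f_i \in K(X \cup Z)$ and $G = \{g_1,\dots,g_b\}$ with each $g_j \in K(Y \cup Z)$. If $F \cup Z$ is algebraically independent over $K$ and $G \cup Z$ is algebraically independent over $K$, then $F \cup Z \cup G$ is algebraically independent over $K$. -/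
/-!
Since `X` is algebraically independent over `K(Y ∪ Z)`, it stays so over the subfield
`K(G ∪ Z)`; together with the independence of `G ∪ Z` this makes `X ∪ G ∪ Z` independent.
The same exchange, now replacing `X` by `F ⊆ K(X ∪ Z)` while keeping `G`, gives `F ∪ G ∪ Z`.
-/

open Set IntermediateField

namespace AlgebraicIndependent

variable {ι κ μ R A : Type*} [CommRing R] [CommRing A] [Algebra R A]
  {x : ι → A} {y : κ → A} {z : μ → A}

theorem sumElim_comm (h : AlgebraicIndependent R (Sum.elim x y)) :
    AlgebraicIndependent R (Sum.elim y x) :=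
  (algebraicIndependent_equiv' (Equiv.sumComm κ ι) Sum.elim_swap).2 h

theorem sumElim_assoc (h : AlgebraicIndependent R (Sum.elim (Sum.elim x y) z)) :
    AlgebraicIndependent R (Sum.elim x (Sum.elim y z)) :=
  (algebraicIndependent_equiv' (Equiv.sumAssoc ι κ μ).symm (by ext (_ | _ | _) <;> rfl)).2 h

theorem sumElim_left_comm (h : AlgebraicIndependent R (Sum.elim x (Sum.elim y z))) :
    AlgebraicIndependent R (Sum.elim y (Sum.elim x z)) :=
  (algebraicIndependent_equiv' ((Equiv.sumAssoc κ ι μ).symm.trans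
      (((Equiv.sumComm κ ι).sumCongr (Equiv.refl μ)).trans (Equiv.sumAssoc ι κ μ)))
    (by ext (_ | _ | _) <;> rfl)).2 h

end AlgebraicIndependent

section

variable {ι κ κ' K L : Type*} [Field K] [Field L] [Algebra K L]

theorem AlgebraicIndependent.of_intermediateField_le {E E' : IntermediateField K L}
    (hle : E ≤ E') {x : ι → L} (hx : AlgebraicIndependent E' x) : AlgebraicIndependent E x :=
  letI := (IntermediateField.inclusion hle).toAlgebra
  haveI : IsScalarTower E E' L := .of_algebraMap_eq fun _ ↦ rfl
  hx.restrictScalars (IntermediateField.inclusion hle).injective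

theorem AlgebraicIndependent.sumElim_of_range_subset_adjoin {x : ι → L} {w : κ → L}
    {w' : κ' → L} (hxw : AlgebraicIndependent K (Sum.elim x w))
    (hw' : AlgebraicIndependent K w') (hrange : range w' ⊆ adjoin K (range w)) :
    AlgebraicIndependent K (Sum.elim x w') := by
  have hx : AlgebraicIndependent (adjoin K (range w)) x :=
    algebraicIndependent_adjoin_iff.2 (sumElim_iff.1 hxw).2
  have hx' : AlgebraicIndependent (adjoin K (range w')) x :=
    hx.of_intermediateField_le (adjoin_le_iff.2 hrange)
  exact sumElim_iff.2 ⟨hw', algebraicIndependent_adjoin_iff.1 hx'⟩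

theorem range_sumElim_subset_adjoin_union {u : ι → L} {v : κ → L} {z : κ' → L}
    (hu : ∀ i, u i ∈ adjoin K (range v ∪ range z)) :
    range (Sum.elim u z) ⊆ adjoin K (range (Sum.elim v z)) := by
  rw [Set.Sum.elim_range, Set.Sum.elim_range]
  exact union_subset (range_subset_iff.2 hu) (subset_union_right.trans (subset_adjoin K _))

end

theorem algIndep_of_two_families_general (K L : Type*) [Field K] [Field L] [Algebra K L]
    (a b c : ℕ) (x : Fin a → L) (y : Fin b → L) (z : Fin c → L)
    (hXYZ : AlgebraicIndependent K (Sum.elim x (Sum.elim y z)))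
    (f : Fin a → L) (g : Fin b → L)
    (hf : ∀ i, f i ∈ IntermediateField.adjoin K (Set.range x ∪ Set.range z))
    (hg : ∀ j, g j ∈ IntermediateField.adjoin K (Set.range y ∪ Set.range z))
    (hFZ : AlgebraicIndependent K (Sum.elim f z))
    (hGZ : AlgebraicIndependent K (Sum.elim g z)) :
    AlgebraicIndependent K (Sum.elim f (Sum.elim z g)) := by
  have hXGZ : AlgebraicIndependent K (Sum.elim x (Sum.elim g z)) :=
    hXYZ.sumElim_of_range_subset_adjoin hGZ (range_sumElim_subset_adjoin_union hg)
  have hGFZ : AlgebraicIndependent K (Sum.elim g (Sum.elim f z)) :=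
    hXGZ.sumElim_left_comm.sumElim_of_range_subset_adjoin hFZ
      (range_sumElim_subset_adjoin_union hf)
  exact hGFZ.sumElim_comm.sumElim_assoc

/-- If `X ∪ Y ∪ Z` is algebraically independent over `K`, the `f i` lie in `K(X ∪ Z)`,
the `g j` lie in `K(Y ∪ Z)`, and both `F ∪ Z` and `G ∪ Z` are algebraically independent
over `K`, then `F ∪ Z ∪ G` is algebraically independent over `K`. -/
theorem algIndep_of_two_families (K L : Type*) [Field K] [Field L] [Algebra K L]
    (a b c : ℕ) (x : Fin a → L) (y : Fin b → L) (z : Fin c → L)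
    (hdisj₁ : ∀ i j, x i ≠ y j) (hdisj₂ : ∀ i j, x i ≠ z j) (hdisj₃ : ∀ i j, y i ≠ z j)
    (hXYZ : AlgebraicIndependent K (Sum.elim x (Sum.elim y z)))
    (f : Fin a → L) (g : Fin b → L)
    (hf : ∀ i, f i ∈ IntermediateField.adjoin K (Set.range x ∪ Set.range z))
    (hg : ∀ j, g j ∈ IntermediateField.adjoin K (Set.range y ∪ Set.range z))
    (hFZ : AlgebraicIndependent K (Sum.elim f z))
    (hGZ : AlgebraicIndependent K (Sum.elim g z)) :
    AlgebraicIndependent K (Sum.elim f (Sum.elim z g)) :=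
  algIndep_of_two_families_general K L a b c x y z hXYZ f g hf hg hFZ hGZ
end

section
/- Let $m,n \geq 1$ and let $x_i^{(r)}$ (for $i \in \{1,\dots,m\}$ and $r \in \mathbb{Z}/n\mathbb{Z}$) be commuting indeterminates. Define the loop elementary symmetric function $E_k^{(r)} = \sum_{1 \le i_1 < \cdots < i_k \le m} x_{i_1}^{(r)} x_{i_2}^{(r+1)} \cdots x_{i_k}^{(r+k-1)}$ for $1 \le k \le m$, with $E_0^{(r)} = 1$ and $E_k^{(r)} = 0$ for $k < 0$ or $k > m$. For $\mathbf{y} = (y^{(1)},\dots,y^{(n)})$, let $\widetilde{W}(\mathbf{y})$ be the $n$-periodic $\mathbb{Z}\times\mathbb{Z}$ matrix with $\widetilde{W}(\mathbf{y})_{i+1,i} = 1$, $\widetilde{W}(\mathbf{y})_{i,i} = y^{(i \bmod n)}$, and all other entries zero. Let $\mathbf{x}_i = (x_i^{(i)}, x_i^{(i+1)},\dots,x_i^{(i+n-1)})$. Then the product $\widetilde{M} = \widetilde{W}(\mathbf{x}_1)\cdots\widetilde{W}(\mathbf{x}_m)$ satisfies $\widetilde{M}_{i,j} = E_{m+j-i}^{(i)}$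 for all $i,j \in \mathbb{Z}$ (superscripts of $E$ interpreted mod $n$). -/
open scoped Classical

/-- The loop elementary symmetric function `E_k^{(r)}` in `m` variables and `n` colors:
`E_k^{(r)} = ∑_{i₁ < ⋯ < i_k} x_{i₁}^{(r)} x_{i₂}^{(r+1)} ⋯ x_{i_k}^{(r+k-1)}`. -/
noncomputable def loopE (m n : ℕ) {R : Type*} [CommRing R]
    (x : Fin m → ZMod n → R) (k : ℕ) (r : ZMod n) : R :=
  ∑ f : {f : Fin k → Fin m // StrictMono f}, ∏ a : Fin k, x (f.1 a) (r + (a : ℕ))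

/-- `E_k^{(r)}` extended to integer subscripts `k`, with value `0` for `k < 0`
(and automatically `0` for `k > m`). -/
noncomputable def loopEZ (m n : ℕ) {R : Type*} [CommRing R]
    (x : Fin m → ZMod n → R) (k : ℤ) (r : ZMod n) : R :=
  if k < 0 then 0 else loopE m n x k.toNat r

/-- The product of the `n`-periodic whirl matrices `W̃(y₁) ⋯ W̃(y_t)` (each whirl
`W̃(y)` has `y^{(i mod n)}` in position `(i,i)`, `1` in position `(i+1,i)` and `0`
elsewhere), computed entrywise: `(W̃(y) · M)_{i,j} = y^{(i)} M_{i,j} + M_{i-1,j}`. -/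
noncomputable def whirlProd {R : Type*} [CommRing R] (n : ℕ) :
    List (ZMod n → R) → ℤ → ℤ → R
  | [], i, j => if i = j then 1 else 0
  | y :: rest, i, j =>
      y (i : ZMod n) * whirlProd n rest i j + whirlProd n rest (i - 1) j

/- Peeling off the first whirl: `(W̃(y) M)_{i,j} = y^{(i)} M_{i,j} + M_{i-1,j}`. Conditioning a
strictly increasing `i₁ < ⋯ < i_k` on whether `i₁ = 1` gives the matching recursion
`E_{k+1}^{(r)}(x₁, …, x_{m+1}) = x₁^{(r)} E_k^{(r)}(x') + E_{k+1}^{(r-1)}(x')`, where `x'` are the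
remaining variables with colours shifted by one; induction on `m` concludes. -/

namespace Fin

abbrev StrictMonoTuple (k m : ℕ) := {f : Fin k → Fin m // StrictMono f}

variable {k m : ℕ}

lemma exists_strictMono_succ_comp_eq {f : Fin k → Fin (m + 1)} (hf : StrictMono f)
    (hne : ∀ a, f a ≠ 0) : ∃ g : Fin k → Fin m, StrictMono g ∧ succ ∘ g = f :=
  ⟨fun a => (f a).pred (hne a), fun a b hab => by simpa [pred_lt_pred_iff] using hf hab,
    funext fun a => succ_pred _ _⟩

def StrictMonoTuple.consZeroSucc (g : StrictMonoTuple k m) : StrictMonoTuple (k + 1) (m + 1) :=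
  ⟨cons 0 (succ ∘ g.1), strictMono_cons.2 ⟨fun _ => succ_pos _, strictMono_succ.comp g.2⟩⟩

def StrictMonoTuple.succComp (g : StrictMonoTuple k m) : StrictMonoTuple k (m + 1) :=
  ⟨succ ∘ g.1, strictMono_succ.comp g.2⟩

/-- A strictly increasing tuple in `Fin (m + 1)` either starts at `0` or avoids `0`. -/
lemma StrictMonoTuple.bijective_sumElim_consZeroSucc_succComp :
    Function.Bijective (Sum.elim (consZeroSucc (k := k) (m := m)) succComp) := by
  refine ⟨Function.Injective.sumElim ?_ ?_ ?_, ?_⟩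
  · intro g g' h
    exact Subtype.ext <| (succ_injective m).comp_left <|
      cons_right_injective (α := fun _ => Fin (m + 1)) 0 (congrArg Subtype.val h)
  · intro g g' h
    exact Subtype.ext <| (succ_injective m).comp_left <| congrArg Subtype.val h
  · intro g g' h
    exact succ_ne_zero _ (congrFun (congrArg Subtype.val h) 0).symm
  · rintro ⟨f, hf⟩
    by_cases h0 : f 0 = 0
    · have hne : ∀ a, tail f a ≠ 0 := fun a => by
        simpa [tail, h0, pos_iff_ne_zero] using hf (succ_pos a)
      obtain ⟨g, hg, hgf⟩ := exists_strictMono_succ_comp_eq (hf.comp strictMono_succ) hne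
      exact ⟨Sum.inl ⟨g, hg⟩, Subtype.ext <| by
        simp only [Sum.elim_inl, consZeroSucc, hgf, ← h0]; exact cons_self_tail f⟩
    · have hne : ∀ a, f a ≠ 0 := fun a =>
        ne_of_gt <| lt_of_lt_of_le (pos_iff_ne_zero.2 h0) (hf.monotone (zero_le a))
      obtain ⟨g, hg, hgf⟩ := exists_strictMono_succ_comp_eq hf hne
      exact ⟨Sum.inr ⟨g, hg⟩, Subtype.ext hgf⟩

end Fin

open Fin

section

variable {m n : ℕ} {R : Type*}

/-- The variables `x₂, …, x_{m+1}` reindexed from `1`, with colours shifted by one. -/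
def tailShift (x : Fin (m + 1) → ZMod n → R) : Fin m → ZMod n → R :=
  fun t c => x t.succ (c + 1)

lemma ofFn_whirls_succ (x : Fin (m + 1) → ZMod n → R) :
    (List.ofFn fun t : Fin (m + 1) => fun c : ZMod n => x t (c + (t : ℕ)))
      = x 0 :: List.ofFn fun t : Fin m => fun c : ZMod n => tailShift x t (c + (t : ℕ)) := by
  simp only [List.ofFn_succ, val_zero, Nat.cast_zero, add_zero, val_succ, tailShift,
    Nat.cast_succ, add_assoc]

variable [CommRing R]

lemma loopE_zero (x : Fin m → ZMod n → R) (r : ZMod n) : loopE m n x 0 r = 1 := by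
  have : Unique (StrictMonoTuple 0 m) :=
    ⟨⟨⟨isEmptyElim, isEmptyElim⟩⟩, fun _ => Subsingleton.elim _ _⟩
  simp [loopE]

lemma loopE_eq_zero_of_lt (x : Fin m → ZMod n → R) {k : ℕ} (r : ZMod n) (h : m < k) :
    loopE m n x k r = 0 := by
  have : IsEmpty (StrictMonoTuple k m) :=
    ⟨fun f => absurd (by simpa using Fintype.card_le_of_injective f.1 f.2.injective) h.not_ge⟩
  simp [loopE]

lemma loopE_succ (x : Fin (m + 1) → ZMod n → R) (k : ℕ) (r : ZMod n) :
    loopE (m + 1) n x (k + 1) r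
      = x 0 r * loopE m n (tailShift x) k r + loopE m n (tailShift x) (k + 1) (r - 1) := by
  rw [loopE, ← Fintype.sum_bijective _ StrictMonoTuple.bijective_sumElim_consZeroSucc_succComp
    _ _ fun _ => rfl, Fintype.sum_sum_type, loopE, loopE, Finset.mul_sum]
  congr 1
  · refine Finset.sum_congr rfl fun g _ => ?_
    rw [Fin.prod_univ_succ]
    simp only [Sum.elim_inl, StrictMonoTuple.consZeroSucc, cons_zero, cons_succ, val_zero,
      Nat.cast_zero, add_zero, Function.comp_apply, val_succ, tailShift]
    congr 2 with a
    push_cast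
    ring_nf
  · refine Finset.sum_congr rfl fun g _ => Finset.prod_congr rfl fun a _ => ?_
    simp only [Sum.elim_inr, StrictMonoTuple.succComp, Function.comp_apply, tailShift]
    ring_nf

lemma loopEZ_of_isEmpty (x : Fin 0 → ZMod n → R) (k : ℤ) (r : ZMod n) :
    loopEZ 0 n x k r = if k = 0 then 1 else 0 := by
  rcases lt_trichotomy k 0 with h | rfl | h
  · simp [loopEZ, h, h.ne]
  · simp [loopEZ, loopE_zero]
  · simp [loopEZ, h.not_gt, h.ne', loopE_eq_zero_of_lt x r (Int.lt_toNat.2 h)]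

lemma loopEZ_succ (x : Fin (m + 1) → ZMod n → R) (k : ℤ) (r : ZMod n) :
    loopEZ (m + 1) n x (k + 1) r
      = x 0 r * loopEZ m n (tailShift x) k r + loopEZ m n (tailShift x) (k + 1) (r - 1) := by
  rcases lt_trichotomy k (-1) with h | rfl | h
  · simp [loopEZ, h.trans (by norm_num : (-1 : ℤ) < 0), show k + 1 < 0 by omega]
  · simp [loopEZ, loopE_zero]
  · have hk : (k + 1).toNat = k.toNat + 1 := by omega
    simp only [loopEZ, show ¬k < 0 by omega, show ¬k + 1 < 0 by omega, if_false, hk, loopE_succ]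

end

theorem whirl_product_loopE_general (m n : ℕ) (R : Type*) [CommRing R]
    (x : Fin m → ZMod n → R) :
    ∀ i j : ℤ,
      whirlProd n (List.ofFn fun t : Fin m => fun c : ZMod n => x t (c + (t : ℕ))) i j
        = loopEZ m n x ((m : ℤ) + j - i) ((i : ℤ) : ZMod n) := by
  induction m with
  | zero =>
    intro i j
    simp only [List.ofFn_zero, whirlProd, loopEZ_of_isEmpty, Nat.cast_zero, zero_add,
      sub_eq_zero, eq_comm]
  | succ m ih =>
    intro i j
    rw [ofFn_whirls_succ, whirlProd, ih, ih, show ((m + 1 : ℕ) : ℤ) + j - i = m + j - i + 1 by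
      push_cast; ring, loopEZ_succ, show (m : ℤ) + j - (i - 1) = m + j - i + 1 by ring,
      Int.cast_sub, Int.cast_one]

/-- The whirl product identity: the `n`-periodic matrix
`M̃ = W̃(𝐱₁) ⋯ W̃(𝐱_m)`, where `𝐱_i = (x_i^{(i)}, x_i^{(i+1)}, …, x_i^{(i+n-1)})`
(so the whirl for row `i` has diagonal entry `x_i^{(i+c-1)}` at position `c`),
satisfies `M̃_{i,j} = E_{m+j-i}^{(i)}` for all `i, j ∈ ℤ`, superscripts mod `n`.
Here rows are `1`-indexed via `t : Fin m ↦` paper row `t+1`. -/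
theorem whirl_product_loopE (m n : ℕ) [NeZero n] (R : Type*) [CommRing R]
    (x : Fin m → ZMod n → R) :
    ∀ i j : ℤ,
      whirlProd n (List.ofFn fun t : Fin m => fun c : ZMod n => x t (c + (t : ℕ))) i j
        = loopEZ m n x ((m : ℤ) + j - i) ((i : ℤ) : ZMod n) :=
  whirl_product_loopE_general m n R x
end

section
/- Let $N$ be an $n \times n$ matrix over a field such that the principal anti-diagonal minors $\Delta_i = \det(N_{[i,n],[1,n+1-i]})$ are nonzero for $i = 2,\dots,n$. Define upper uni-triangular matrices $U$ and $V$ by $U_{ij} = (-1)^{i+j} \det(N_{([i,n]\setminus\{j\}),[1,n-i]})/\det(N_{[i+1,n],[1,n-i]})$ for $i \le j$ (and $U_{ij}=0$ for $i > j$), and $V_{ij} = (-1)^{i+j}\det(N_{[n-j+2,n],([1,j]\setminus\{i\})})/\det(N_{[n-j+2,n],[1,j-1]})$ for $i \le j$ (and $V_{ij}=0$ for $i>j$). Then $UNV$ is the anti-diagonal matrix whose $(i, n+1-i)$ entry equals $(-1)^{n-i}\Delta_i/\Delta_{i+1}$, where $\Delta_{n+1} = 1$ and $\Delta_1 = \det(N)$.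 -/
/-- The minor `Δ_{I,J}(N)` of a square matrix with row set `I` and column set `J`
(both taken in increasing order); equal to `0` if `|I| ≠ |J|`, and `1` if both are
empty. -/
noncomputable def minorF {K : Type*} [CommRing K] {n : ℕ}
    (N : Matrix (Fin n) (Fin n) K) (I J : Finset (Fin n)) : K :=
  if h : I.card = J.card then
    Matrix.det (Matrix.of fun a b : Fin I.card =>
      N ((I.orderIsoOfFin rfl a : Fin n)) ((J.orderIsoOfFin h.symm b : Fin n)))
  else 0

/-- The interval `[a, b]` (1-indexed) inside `Fin n`. -/
def II (n a b : ℕ) : Finset (Fin n) :=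
  Finset.univ.filter fun t => a ≤ (t : ℕ) + 1 ∧ (t : ℕ) + 1 ≤ b



lemma mem_II {n a b : ℕ} {t : Fin n} : t ∈ II n a b ↔ a ≤ (t : ℕ) + 1 ∧ (t : ℕ) + 1 ≤ b := by
  simp [II]

lemma minorF_eq {K : Type*} [CommRing K] {n : ℕ} (N : Matrix (Fin n) (Fin n) K) {k : ℕ}
    (I J : Finset (Fin n)) (f g : Fin k → Fin n) (hf : StrictMono f) (hg : StrictMono g)
    (hI : I = Finset.image f Finset.univ) (hJ : J = Finset.image g Finset.univ) :
    minorF N I J = Matrix.det (Matrix.of fun a b : Fin k => N (f a) (g b)) := by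
  have hIc : I.card = k := by
    rw [hI, Finset.card_image_of_injective _ hf.injective, Finset.card_univ, Fintype.card_fin]
  have hJc : J.card = k := by
    rw [hJ, Finset.card_image_of_injective _ hg.injective, Finset.card_univ, Fintype.card_fin]
  subst hIc
  have h' : I.card = J.card := hJc.symm
  have hfI : ∀ x, f x ∈ I := fun x => by
    rw [hI]; exact Finset.mem_image_of_mem f (Finset.mem_univ x)
  have hgJ : ∀ x, g x ∈ J := fun x => by
    rw [hJ]; exact Finset.mem_image_of_mem g (Finset.mem_univ x)
  unfold minorF
  rw [dif_pos h']
  congr 1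
  ext a b
  simp only [Matrix.of_apply]
  rw [Finset.coe_orderIsoOfFin_apply, Finset.coe_orderIsoOfFin_apply,
    ← Finset.orderEmbOfFin_unique (rfl : I.card = I.card) hfI hf,
    ← Finset.orderEmbOfFin_unique h'.symm hgJ hg]

lemma minorF_empty {K : Type*} [CommRing K] {n : ℕ} (N : Matrix (Fin n) (Fin n) K) :
    minorF N ∅ ∅ = 1 := by
  rw [minorF_eq N ∅ ∅ Fin.elim0 Fin.elim0 (fun x => x.elim0) (fun x => x.elim0)
    (by simp) (by simp)]
  exact Matrix.det_fin_zero

lemma succAbove_val {m : ℕ} (a : Fin (m+1)) (a' : Fin m) :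
    ((a.succAbove a') : ℕ) = if (a' : ℕ) < (a : ℕ) then (a' : ℕ) else (a' : ℕ) + 1 := by
  rcases lt_or_ge (a'.castSucc) a with h | h
  · rw [Fin.succAbove_of_castSucc_lt _ _ h]
    have : (a' : ℕ) < (a : ℕ) := by simpa [Fin.lt_def] using h
    simp [this]
  · rw [Fin.succAbove_of_le_castSucc _ _ h]
    have : (a : ℕ) ≤ (a' : ℕ) := by simpa [Fin.le_def] using h
    rw [if_neg (by omega)]
    simp [Fin.val_succ]

def rowE {n : ℕ} (i : Fin n) : Fin (n-1-(i:ℕ)+1) → Fin n :=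
  fun a => ⟨(i:ℕ)+(a:ℕ), by have := a.isLt; have := i.isLt; omega⟩

lemma rowE_strictMono {n : ℕ} (i : Fin n) : StrictMono (rowE i) := by
  intro x y h
  simp only [rowE, Fin.lt_def] at *
  omega

def Amat {K : Type*} [CommRing K] {n : ℕ} (N : Matrix (Fin n) (Fin n) K) (i k : Fin n) :
    Matrix (Fin (n-1-(i:ℕ)+1)) (Fin (n-1-(i:ℕ)+1)) K :=
  Matrix.of fun a b =>
    N (rowE i a) (if h : (b:ℕ) < n-1-(i:ℕ) then ⟨(b:ℕ), by have := i.isLt; omega⟩ else k)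

lemma minorF_eraseA {K : Type*} [CommRing K] {n : ℕ} (N : Matrix (Fin n) (Fin n) K)
    (i : Fin n) (a : Fin (n-1-(i:ℕ)+1)) :
    minorF N ((II n ((i:ℕ)+1) n).erase (rowE i a)) (II n 1 (n-1-(i:ℕ)))
      = Matrix.det (Matrix.of fun a' b' : Fin (n-1-(i:ℕ)) =>
          N (rowE i (a.succAbove a')) ⟨(b':ℕ), by have := i.isLt; have := b'.isLt; omega⟩) := by
  apply minorF_eq
  · exact (rowE_strictMono i).comp (Fin.strictMono_succAbove a)
  · intro x y h
    simp only [Fin.lt_def] at *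
    omega
  · ext t
    simp only [Finset.mem_erase, mem_II, Finset.mem_image, Finset.mem_univ, true_and]
    constructor
    · rintro ⟨hne, h1, h2⟩
      have hne' : (t:ℕ) ≠ (i:ℕ) + (a:ℕ) := by
        intro hc; exact hne (Fin.ext hc)
      by_cases hc : (t:ℕ) - (i:ℕ) < (a:ℕ)
      · refine ⟨⟨(t:ℕ)-(i:ℕ), by omega⟩, Fin.ext ?_⟩
        simp only [rowE, succAbove_val]
        split <;> omega
      · refine ⟨⟨(t:ℕ)-(i:ℕ)-1, by omega⟩, Fin.ext ?_⟩
        simp only [rowE, succAbove_val]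
        split <;> omega
    · rintro ⟨a', rfl⟩
      have hv := succAbove_val a a'
      refine ⟨fun hc => ?_, by simp only [rowE]; split at hv <;> omega,
        by simp only [rowE]; split at hv <;> omega⟩
      have hc' := congrArg Fin.val hc
      simp only [rowE] at hc'
      split at hv <;> omega
  · ext t
    simp only [mem_II, Finset.mem_image, Finset.mem_univ, true_and]
    constructor
    · intro h
      exact ⟨⟨(t:ℕ), by omega⟩, Fin.ext rfl⟩
    · rintro ⟨b', rfl⟩
      simp only []
      omega

lemma neg1pow {K : Type*} [CommRing K] {x y : ℕ} (h : x % 2 = y % 2) :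
    (-1:K)^x = (-1)^y := by
  conv_lhs => rw [← Nat.div_add_mod x 2]
  conv_rhs => rw [← Nat.div_add_mod y 2]
  rw [h, pow_add, pow_add, pow_mul, pow_mul, neg_one_sq, one_pow, one_pow]

lemma term_eq {K : Type*} [Field K] (i a m' : ℕ) (Mv Nv d : K) :
    ((-1:K)^(i+(i+a)) * Mv / d) * Nv = (-1:K)^m' * ((-1:K)^(a+m') * Nv * Mv) / d := by
  have h1 : (-1:K)^(i+(i+a)) = (-1)^a := neg1pow (by omega)
  have h2 : (-1:K)^(m') * (-1:K)^(a+m') = (-1)^a := by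
    rw [← pow_add]; exact neg1pow (by omega)
  rw [h1, div_mul_eq_mul_div]
  rw [show (-1:K)^m' * ((-1:K)^(a+m') * Nv * Mv) = ((-1:K)^m' * (-1:K)^(a+m')) * Nv * Mv by ring,
    h2]
  ring

lemma UN_apply {K : Type*} [Field K] {n : ℕ} (N U : Matrix (Fin n) (Fin n) K)
    (hU : ∀ i j : Fin n, U i j =
      if (i : ℕ) ≤ (j : ℕ) then
        (-1 : K) ^ ((i : ℕ) + (j : ℕ)) *
          minorF N ((II n ((i : ℕ) + 1) n).erase j) (II n 1 (n - 1 - (i : ℕ))) /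
          minorF N (II n ((i : ℕ) + 2) n) (II n 1 (n - 1 - (i : ℕ)))
      else 0) (i k : Fin n) :
    (U * N) i k = (-1:K)^(n-1-(i:ℕ)) * (Amat N i k).det
      / minorF N (II n ((i:ℕ)+2) n) (II n 1 (n-1-(i:ℕ))) := by
  rw [Matrix.mul_apply]
  have hvan : ∀ j ∈ Finset.univ, j ∉ Finset.image (rowE i) Finset.univ →
      U i j * N j k = 0 := by
    intro j _ hj
    have hji : (j:ℕ) < (i:ℕ) := by
      by_contra hge
      push_neg at hge
      exact hj (Finset.mem_image.2 ⟨⟨(j:ℕ)-(i:ℕ), by omega⟩, Finset.mem_univ _,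
        Fin.ext (by simp only [rowE]; omega)⟩)
    rw [hU, if_neg (by omega), zero_mul]
  rw [← Finset.sum_subset (Finset.subset_univ _) hvan,
    Finset.sum_image (fun x _ y _ h => (rowE_strictMono i).injective h)]
  rw [Matrix.det_succ_column (Amat N i k) (Fin.last _), Finset.mul_sum, Finset.sum_div]
  refine Finset.sum_congr rfl fun a _ => ?_
  rw [hU, if_pos (by simp only [rowE]; omega), minorF_eraseA N i a]
  have hAlast : Amat N i k a (Fin.last _) = N (rowE i a) k := by
    simp only [Amat, Matrix.of_apply, Fin.val_last]
    rw [dif_neg (lt_irrefl _)]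
  have hsub : (Amat N i k).submatrix a.succAbove (Fin.last _).succAbove
      = Matrix.of fun a' b' : Fin (n-1-(i:ℕ)) =>
          N (rowE i (a.succAbove a')) ⟨(b':ℕ), by have := i.isLt; have := b'.isLt; omega⟩ := by
    ext a' b'
    have hb : (((Fin.last (n-1-(i:ℕ))).succAbove b') : ℕ) = (b' : ℕ) := by
      rw [succAbove_val, Fin.val_last, if_pos b'.isLt]
    simp only [Matrix.submatrix_apply, Amat, Matrix.of_apply]
    rw [dif_pos (by rw [hb]; exact b'.isLt)]
    congr 1
    exact Fin.ext hb
  rw [hAlast, hsub]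
  simp only [rowE, Fin.val_mk, Fin.val_last]
  exact term_eq (i:ℕ) (a:ℕ) (n-1-(i:ℕ)) _ _ _

lemma Amat_det_zero {K : Type*} [CommRing K] {n : ℕ} (N : Matrix (Fin n) (Fin n) K)
    (i k : Fin n) (h : (k:ℕ) < n-1-(i:ℕ)) : (Amat N i k).det = 0 := by
  refine Matrix.det_zero_of_column_eq (M := Amat N i k) (i := ⟨(k:ℕ), by omega⟩)
    (j := Fin.last _) ?_ ?_
  · intro hc
    have := congrArg Fin.val hc
    simp only [Fin.val_mk, Fin.val_last] at this
    omega
  · intro a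
    simp only [Amat, Matrix.of_apply, Fin.val_mk, Fin.val_last]
    rw [dif_pos h, dif_neg (lt_irrefl _)]

lemma Amat_det_diag {K : Type*} [CommRing K] {n : ℕ} (N : Matrix (Fin n) (Fin n) K)
    (i k : Fin n) (h : (k:ℕ) = n-1-(i:ℕ)) :
    (Amat N i k).det = minorF N (II n ((i:ℕ)+1) n) (II n 1 (n-(i:ℕ))) := by
  rw [minorF_eq N _ _ (rowE i)
    (fun b => ⟨(b:ℕ), by have := b.isLt; have := i.isLt; omega⟩) (rowE_strictMono i)
    (fun x y hxy => by simpa only [Fin.lt_def, Fin.val_mk] using hxy)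
    ?_ ?_]
  · congr 1
    ext a b
    simp only [Amat, Matrix.of_apply]
    split_ifs with hb
    · rfl
    · exact congrArg _ (Fin.ext (show (k:ℕ) = (b:ℕ) by have := b.isLt; omega))
  · ext t
    simp only [mem_II, Finset.mem_image, Finset.mem_univ, true_and]
    constructor
    · rintro ⟨h1, h2⟩
      have := t.isLt
      exact ⟨⟨(t:ℕ)-(i:ℕ), by omega⟩, Fin.ext (by simp only [rowE, Fin.val_mk]; omega)⟩
    · rintro ⟨a, rfl⟩
      have := a.isLt
      simp only [rowE, Fin.val_mk]
      omega
  · ext t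
    simp only [mem_II, Finset.mem_image, Finset.mem_univ, true_and]
    constructor
    · rintro ⟨h1, h2⟩
      exact ⟨⟨(t:ℕ), by have := i.isLt; omega⟩, Fin.ext rfl⟩
    · rintro ⟨b, rfl⟩
      have := b.isLt
      simp only [Fin.val_mk]
      omega

/-! ### B side -/

def rowB {K : Type*} [CommRing K] {n : ℕ} (j k : Fin n) : Fin ((k:ℕ)+1) → Fin n :=
  fun a => if h : (a:ℕ) = 0 then j
    else ⟨n - (k:ℕ) + ((a:ℕ) - 1), by have := a.isLt; have := k.isLt; omega⟩

def Bmat {K : Type*} [CommRing K] {n : ℕ} (N : Matrix (Fin n) (Fin n) K) (j k : Fin n) :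
    Matrix (Fin ((k:ℕ)+1)) (Fin ((k:ℕ)+1)) K :=
  Matrix.of fun a b =>
    N (rowB (K := K) j k a) ⟨(b:ℕ), by have := b.isLt; have := k.isLt; omega⟩

lemma minorF_eraseB {K : Type*} [CommRing K] {n : ℕ} (N : Matrix (Fin n) (Fin n) K)
    (j k : Fin n) (b : Fin ((k:ℕ)+1)) :
    minorF N (II n (n-(k:ℕ)+1) n)
        ((II n 1 ((k:ℕ)+1)).erase ⟨(b:ℕ), by have := b.isLt; have := k.isLt; omega⟩)
      = Matrix.det (Matrix.of fun a' b' : Fin (k:ℕ) =>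
          N ⟨n-(k:ℕ)+(a':ℕ), by have := a'.isLt; have := k.isLt; omega⟩
            ⟨((b.succAbove b'):ℕ), by have := (b.succAbove b').isLt; have := k.isLt; omega⟩) := by
  apply minorF_eq
  · intro x y hxy
    simp only [Fin.lt_def, Fin.val_mk] at *
    omega
  · intro x y hxy
    have hx := succAbove_val b x
    have hy := succAbove_val b y
    simp only [Fin.lt_def, Fin.val_mk] at *
    split at hx <;> split at hy <;> omega
  · ext t
    simp only [mem_II, Finset.mem_image, Finset.mem_univ, true_and]
    constructor
    · rintro ⟨h1, h2⟩
      have := t.isLt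
      have := k.isLt
      exact ⟨⟨(t:ℕ)-(n-(k:ℕ)), by omega⟩, Fin.ext (by simp only [Fin.val_mk]; omega)⟩
    · rintro ⟨a', rfl⟩
      have := a'.isLt
      have := k.isLt
      simp only [Fin.val_mk]
      omega
  · ext t
    simp only [Finset.mem_erase, mem_II, Finset.mem_image, Finset.mem_univ, true_and]
    constructor
    · rintro ⟨hne, h1, h2⟩
      have hne' : (t:ℕ) ≠ (b:ℕ) := by
        intro hc; exact hne (Fin.ext hc)
      by_cases hc : (t:ℕ) < (b:ℕ)
      · refine ⟨⟨(t:ℕ), by have := b.isLt; omega⟩, Fin.ext ?_⟩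
        simp only [Fin.val_mk, succAbove_val]
        split <;> omega
      · refine ⟨⟨(t:ℕ)-1, by omega⟩, Fin.ext ?_⟩
        simp only [Fin.val_mk, succAbove_val]
        split <;> omega
    · rintro ⟨b', rfl⟩
      have hv := succAbove_val b b'
      have := b'.isLt
      simp only [ne_eq, Fin.ext_iff, Fin.val_mk]
      split at hv <;> omega

lemma termB_eq {K : Type*} [Field K] (b p : ℕ) (Mv Nv d : K) :
    Nv * ((-1:K)^(b+p) * Mv / d) = (-1:K)^p * ((-1:K)^b * Nv * Mv) / d := by
  rw [show (-1:K)^p * ((-1:K)^b * Nv * Mv) = ((-1:K)^b * (-1:K)^p) * Nv * Mv by ring,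
    ← pow_add]
  ring

lemma NV_apply {K : Type*} [Field K] {n : ℕ} (N V : Matrix (Fin n) (Fin n) K)
    (hV : ∀ i j : Fin n, V i j =
      if (i : ℕ) ≤ (j : ℕ) then
        (-1 : K) ^ ((i : ℕ) + (j : ℕ)) *
          minorF N (II n (n - (j : ℕ) + 1) n) ((II n 1 ((j : ℕ) + 1)).erase i) /
          minorF N (II n (n - (j : ℕ) + 1) n) (II n 1 (j : ℕ))
      else 0) (j k : Fin n) :
    (N * V) j k = (-1:K)^(k:ℕ) * (Bmat N j k).det
      / minorF N (II n (n-(k:ℕ)+1) n) (II n 1 (k:ℕ)) := by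
  rw [Matrix.mul_apply]
  have hvan : ∀ t ∈ Finset.univ,
      t ∉ Finset.image (fun b : Fin ((k:ℕ)+1) =>
        (⟨(b:ℕ), by have := b.isLt; have := k.isLt; omega⟩ : Fin n)) Finset.univ →
      N j t * V t k = 0 := by
    intro t _ ht
    have htk : (k:ℕ) < (t:ℕ) := by
      by_contra hge
      push_neg at hge
      exact ht (Finset.mem_image.2 ⟨⟨(t:ℕ), by omega⟩, Finset.mem_univ _, Fin.ext rfl⟩)
    rw [hV, if_neg (by omega), mul_zero]
  rw [← Finset.sum_subset (Finset.subset_univ _) hvan,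
    Finset.sum_image (fun x _ y _ h => by
      have := congrArg Fin.val h
      simp only [Fin.val_mk] at this
      exact Fin.ext this)]
  rw [Matrix.det_succ_row_zero (Bmat N j k), Finset.mul_sum, Finset.sum_div]
  refine Finset.sum_congr rfl fun b _ => ?_
  rw [hV, if_pos (by simp only [Fin.val_mk]; omega), minorF_eraseB N j k b]
  have hB0 : Bmat N j k 0 b = N j ⟨(b:ℕ), by have := b.isLt; have := k.isLt; omega⟩ := by
    simp only [Bmat, Matrix.of_apply, rowB]
    rw [dif_pos (by simp)]
  have hsub : (Bmat N j k).submatrix Fin.succ b.succAbove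
      = Matrix.of fun a' b' : Fin (k:ℕ) =>
          N ⟨n-(k:ℕ)+(a':ℕ), by have := a'.isLt; have := k.isLt; omega⟩
            ⟨((b.succAbove b'):ℕ), by have := (b.succAbove b').isLt; have := k.isLt; omega⟩ := by
    ext a' b'
    simp only [Matrix.submatrix_apply, Bmat, Matrix.of_apply, rowB]
    rw [dif_neg (by simp [Fin.val_succ])]
    congr 1
  rw [hB0, hsub]
  simp only [Fin.val_mk]
  exact termB_eq (b:ℕ) (k:ℕ) _ _ _

lemma Bmat_det_zero {K : Type*} [CommRing K] {n : ℕ} (N : Matrix (Fin n) (Fin n) K)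
    (j k : Fin n) (h : n ≤ (j:ℕ) + (k:ℕ)) : (Bmat N j k).det = 0 := by
  have hj := j.isLt
  have hk := k.isLt
  refine Matrix.det_zero_of_row_eq (M := Bmat N j k) (i := 0)
    (j := ⟨(j:ℕ) - (n - (k:ℕ)) + 1, by omega⟩) ?_ ?_
  · intro hc
    have := congrArg Fin.val hc
    simp only [Fin.val_mk, Fin.val_zero] at this
    omega
  · funext b
    simp only [Bmat, Matrix.of_apply, rowB]
    rw [dif_pos (by simp), dif_neg (show ¬((j:ℕ) - (n - (k:ℕ)) + 1 = 0) by omega)]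
    congr 1
    exact Fin.ext (by show (j:ℕ) = n - (k:ℕ) + ((j:ℕ) - (n - (k:ℕ)) + 1 - 1); omega)

lemma V_diag {K : Type*} [Field K] {n : ℕ} (N V : Matrix (Fin n) (Fin n) K)
    (hΔ : ∀ i : ℕ, 2 ≤ i → i ≤ n → minorF N (II n i n) (II n 1 (n + 1 - i)) ≠ 0)
    (hV : ∀ i j : Fin n, V i j =
      if (i : ℕ) ≤ (j : ℕ) then
        (-1 : K) ^ ((i : ℕ) + (j : ℕ)) *
          minorF N (II n (n - (j : ℕ) + 1) n) ((II n 1 ((j : ℕ) + 1)).erase i) /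
          minorF N (II n (n - (j : ℕ) + 1) n) (II n 1 (j : ℕ))
      else 0) (k : Fin n) : V k k = 1 := by
  rw [hV, if_pos le_rfl]
  have h1 : (II n 1 ((k:ℕ)+1)).erase k = II n 1 (k:ℕ) := by
    ext t
    simp only [Finset.mem_erase, mem_II, ne_eq, Fin.ext_iff]
    omega
  rw [h1]
  rcases Nat.eq_zero_or_pos (k:ℕ) with h0 | h0
  · have e1 : II n (n - (k:ℕ) + 1) n = (∅ : Finset (Fin n)) := by
      ext t; simp only [mem_II, Finset.notMem_empty, iff_false, not_and]; omega
    have e2 : II n 1 (k:ℕ) = (∅ : Finset (Fin n)) := by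
      ext t; simp only [mem_II, Finset.notMem_empty, iff_false, not_and]; omega
    rw [e1, e2, minorF_empty, h0]
    norm_num
  · have hne := hΔ (n - (k:ℕ) + 1) (by have := k.isLt; omega) (by omega)
    rw [show n + 1 - (n - (k:ℕ) + 1) = (k:ℕ) by have := k.isLt; omega] at hne
    rw [mul_div_assoc, div_self hne, mul_one]
    exact (neg1pow (by omega)).trans (pow_zero _)


/-- If the principal anti-diagonal minors `Δ_i = Δ_{[i,n],[1,n+1-i]}(N)` are nonzero for
`i = 2, …, n`, then with `U`, `V` the given upper uni-triangular matrices, `U N V` is the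
anti-diagonal matrix whose `(i, n+1-i)` entry is `(-1)^{n-i} Δ_i / Δ_{i+1}`
(paper 1-indexed; here `i j : Fin n` are 0-indexed, paper index `= i+1`). -/
theorem UNV_antidiagonal (n : ℕ) (K : Type*) [Field K] (N : Matrix (Fin n) (Fin n) K)
    (hΔ : ∀ i : ℕ, 2 ≤ i → i ≤ n → minorF N (II n i n) (II n 1 (n + 1 - i)) ≠ 0)
    (U V : Matrix (Fin n) (Fin n) K)
    (hU : ∀ i j : Fin n, U i j =
      if (i : ℕ) ≤ (j : ℕ) then
        (-1 : K) ^ ((i : ℕ) + (j : ℕ)) *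
          minorF N ((II n ((i : ℕ) + 1) n).erase j) (II n 1 (n - 1 - (i : ℕ))) /
          minorF N (II n ((i : ℕ) + 2) n) (II n 1 (n - 1 - (i : ℕ)))
      else 0)
    (hV : ∀ i j : Fin n, V i j =
      if (i : ℕ) ≤ (j : ℕ) then
        (-1 : K) ^ ((i : ℕ) + (j : ℕ)) *
          minorF N (II n (n - (j : ℕ) + 1) n) ((II n 1 ((j : ℕ) + 1)).erase i) /
          minorF N (II n (n - (j : ℕ) + 1) n) (II n 1 (j : ℕ))
      else 0) :
    U * N * V = Matrix.of fun i j : Fin n =>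
      if (i : ℕ) + (j : ℕ) + 1 = n then
        (-1 : K) ^ (n - ((i : ℕ) + 1)) *
          minorF N (II n ((i : ℕ) + 1) n) (II n 1 (n - (i : ℕ))) /
          minorF N (II n ((i : ℕ) + 2) n) (II n 1 (n - 1 - (i : ℕ)))
      else 0 := by

  ext i k
  simp only [Matrix.of_apply]
  by_cases hd : (i:ℕ) + (k:ℕ) + 1 = n
  · rw [if_pos hd, Matrix.mul_apply,
      Finset.sum_eq_single k ?_ (fun h => absurd (Finset.mem_univ k) h)]
    · rw [V_diag N V hΔ hV k, mul_one, UN_apply N U hU i k,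
        Amat_det_diag N i k (by omega),
        show n - ((i:ℕ)+1) = n - 1 - (i:ℕ) by omega]
    · intro j _ hjk
      by_cases hjk2 : (j:ℕ) ≤ (k:ℕ)
      · have hjlt : (j:ℕ) < (k:ℕ) :=
          lt_of_le_of_ne hjk2 (fun hc => hjk (Fin.ext hc))
        rw [UN_apply N U hU i j, Amat_det_zero N i j (by omega), mul_zero, zero_div,
          zero_mul]
      · rw [hV, if_neg (by omega), mul_zero]
  · rw [if_neg hd]
    rcases Nat.lt_or_ge ((i:ℕ) + (k:ℕ) + 1) n with hlt | hgt
    · rw [Matrix.mul_apply]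
      refine Finset.sum_eq_zero fun j _ => ?_
      by_cases hjk2 : (j:ℕ) ≤ (k:ℕ)
      · rw [UN_apply N U hU i j, Amat_det_zero N i j (by omega), mul_zero, zero_div,
          zero_mul]
      · rw [hV, if_neg (by omega), mul_zero]
    · rw [Matrix.mul_assoc, Matrix.mul_apply]
      refine Finset.sum_eq_zero fun j _ => ?_
      by_cases hij : (i:ℕ) ≤ (j:ℕ)
      · rw [NV_apply N V hV j k, Bmat_det_zero N j k (by omega), mul_zero, zero_div,
          mul_zero]
      · rw [hU, if_neg (by omega), zero_mul]
end

section
/- (Cardinality of the Kirillov–Berenstein pattern set) For $k \geq 2$, let $\mathcal{P}_{k-1}$ be the set of triangular arrays $(p_{i,j})_{1 \le i \le j \le k-1}$ of nonnegative integers satisfying the Gelfand–Tsetlin inequalities $p_{i,j+1} \ge p_{i,j} \ge p_{i+1,j+1}$, together with: (1) $p_{i,j} - 1 \le p_{i+1,j}$ for $i < j$; (2) $p_{i,k-1} - 1 \le p_{i,i} \le p_{i+1,k-1}$ for $i \le k-2$; (3) $p_{k-1,k-1} = 0$. Then $|\mathcal{P}_{k-1}| = (k-1)!$. -/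
namespace KB
open Finset

def Cond (n : ℕ) (p : ℕ → ℕ → ℕ) : Prop :=
  (∀ i j, ¬(1 ≤ i ∧ i ≤ j ∧ j ≤ n) → p i j = 0) ∧
  (∀ i j, 1 ≤ i → i ≤ j → j + 1 ≤ n →
    p i j ≤ p i (j + 1) ∧ p (i + 1) (j + 1) ≤ p i j) ∧
  (∀ i j, 1 ≤ i → i < j → j ≤ n → p i j ≤ p (i + 1) j + 1) ∧
  (∀ i, 1 ≤ i → i ≤ n - 1 → p i n ≤ p i i + 1 ∧ p i i ≤ p (i + 1) n) ∧
  p n n = 0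

/-- indicator for the diagonal increment between rows m and m+1 -/
def ind (n : ℕ) (s : ℕ → ℕ) (m : ℕ) : ℕ :=
  if s (m + 1) ≤ s m ∧ s (m + 1) ≤ n then 1 else 0

/-- diagonal value of row i -/
def aOf (n : ℕ) (s : ℕ → ℕ) (i : ℕ) : ℕ := ∑ m ∈ Finset.Ico i n, ind n s m

/-- the pattern built from jump data s -/
def pOf (n : ℕ) (s : ℕ → ℕ) (i j : ℕ) : ℕ :=
  if 1 ≤ i ∧ i ≤ j ∧ j ≤ n then aOf n s i + (if s i ≤ j then 1 else 0) else 0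

lemma ind_le_one (n : ℕ) (s : ℕ → ℕ) (m : ℕ) : ind n s m ≤ 1 := by
  unfold ind; split <;> omega

lemma aOf_succ (n : ℕ) (s : ℕ → ℕ) {i : ℕ} (h : i < n) :
    aOf n s i = ind n s i + aOf n s (i + 1) := by
  unfold aOf
  rw [Finset.sum_eq_sum_Ico_succ_bot h]

lemma pOf_eq (n : ℕ) (s : ℕ → ℕ) {i j : ℕ} (h1 : 1 ≤ i) (h2 : i ≤ j) (h3 : j ≤ n) :
    pOf n s i j = aOf n s i + (if s i ≤ j then 1 else 0) := by
  unfold pOf; rw [if_pos ⟨h1, h2, h3⟩]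

lemma pOf_cond (n : ℕ) (s : ℕ → ℕ)
    (H : ∀ r, 1 ≤ r → r ≤ n → r + 1 ≤ s r ∧ s r ≤ n + 1) :
    Cond n (pOf n s) := by
  refine ⟨fun i j h => by unfold pOf; rw [if_neg h], ?_, ?_, ?_, ?_⟩
  · -- GT inequalities
    intro i j hi hij hjn
    have hin : i < n := by omega
    have hsi := H i hi (by omega)
    have hsi1 := H (i+1) (by omega) (by omega)
    rw [pOf_eq n s hi hij (by omega), pOf_eq n s hi (by omega) (by omega),
        pOf_eq n s (by omega) (by omega) (by omega)]
    constructor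
    · have : (if s i ≤ j then 1 else 0) ≤ (if s i ≤ j + 1 then 1 else 0) := by
        split <;> split <;> omega
      omega
    · rw [aOf_succ n s hin]
      by_cases hc : s (i+1) ≤ s i ∧ s (i+1) ≤ n
      · have : ind n s i = 1 := by unfold ind; rw [if_pos hc]
        have h4 : (if s (i+1) ≤ j + 1 then 1 else 0) ≤ 1 := by split <;> omega
        omega
      · have h0 : ind n s i = 0 := by unfold ind; rw [if_neg hc]
        rcases Classical.em (s (i+1) ≤ n) with h | h
        · have hlt : s i < s (i+1) := by
            rcases Classical.em (s (i+1) ≤ s i) with h' | h'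
            · exact absurd ⟨h', h⟩ hc
            · omega
          have : (if s (i+1) ≤ j + 1 then 1 else 0) ≤ (if s i ≤ j then 1 else 0) := by
            split <;> split <;> omega
          omega
        · have : (if s (i+1) ≤ j + 1 then 1 else 0) = 0 := by
            rw [if_neg]; omega
          have h4 : (if s i ≤ j then 1 else 0) ≥ 0 := by omega
          omega
  · -- column condition
    intro i j hi hij hjn
    have hin : i < n := by omega
    rw [pOf_eq n s hi (by omega) hjn, pOf_eq n s (by omega) (by omega) hjn]
    rw [aOf_succ n s hin]
    by_cases hc : s (i+1) ≤ s i ∧ s (i+1) ≤ n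
    · have h1 : ind n s i = 1 := by unfold ind; rw [if_pos hc]
      have : (if s i ≤ j then 1 else 0) ≤ (if s (i+1) ≤ j then 1 else 0) := by
        split <;> split <;> omega
      omega
    · have h0 : ind n s i = 0 := by unfold ind; rw [if_neg hc]
      have : (if s i ≤ j then 1 else 0) ≤ 1 := by split <;> omega
      have : (0:ℕ) ≤ (if s (i+1) ≤ j then 1 else 0) := by omega
      omega
  · -- condition (2)
    intro i hi hin'
    have hin : i < n := by omega
    have hsi := H i hi (by omega)
    have hsi1 := H (i+1) (by omega) (by omega)
    rw [pOf_eq n s hi (by omega) le_rfl, pOf_eq n s hi le_rfl (by omega),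
        pOf_eq n s (by omega) (by omega) le_rfl]
    have hdiag : (if s i ≤ i then 1 else 0) = 0 := by rw [if_neg]; omega
    rw [aOf_succ n s hin]
    constructor
    · have : (if s i ≤ n then 1 else 0) ≤ 1 := by split <;> omega
      omega
    · by_cases hc : s (i+1) ≤ s i ∧ s (i+1) ≤ n
      · have h1 : ind n s i = 1 := by unfold ind; rw [if_pos hc]
        have : (if s (i+1) ≤ n then 1 else 0) = 1 := by rw [if_pos hc.2]
        omega
      · have h0 : ind n s i = 0 := by unfold ind; rw [if_neg hc]
        have : (0:ℕ) ≤ (if s (i+1) ≤ n then 1 else 0) := by omega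
        omega
  · -- p n n = 0
    rcases Nat.eq_zero_or_pos n with h | h
    · subst h; unfold pOf; rw [if_neg]; omega
    · have hs := H n (by omega) le_rfl
      rw [pOf_eq n s (by omega) le_rfl le_rfl]
      have : (if s n ≤ n then 1 else 0) = 0 := by rw [if_neg]; omega
      unfold aOf
      simp [this]

open Finset

-- threshold lemma for monotone predicates on an interval
lemma threshold {l u : ℕ} (P : ℕ → Prop) [DecidablePred P]
    (mono : ∀ ⦃j j'⦄, l ≤ j → j ≤ j' → j' ≤ u → P j → P j')
    {j : ℕ} (hj : l ≤ j) (hju : j ≤ u) :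
    (P j ↔ u + 1 - ((Finset.Icc l u).filter P).card ≤ j) := by
  set c := ((Finset.Icc l u).filter P).card with hc
  constructor
  · intro hPj
    have hsub : Finset.Icc j u ⊆ (Finset.Icc l u).filter P := by
      intro x hx
      rw [Finset.mem_Icc] at hx
      rw [Finset.mem_filter, Finset.mem_Icc]
      exact ⟨⟨by omega, hx.2⟩, mono hj hx.1 hx.2 hPj⟩
    have := Finset.card_le_card hsub
    rw [Nat.card_Icc] at this
    omega
  · intro h
    by_contra hPj
    have hsub : (Finset.Icc l u).filter P ⊆ Finset.Icc (j+1) u := by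
      intro x hx
      rw [Finset.mem_filter, Finset.mem_Icc] at hx
      rw [Finset.mem_Icc]
      refine ⟨?_, hx.1.2⟩
      by_contra hlt
      exact hPj (mono hx.1.1 (by omega) hju hx.2)
    have := Finset.card_le_card hsub
    rw [Nat.card_Icc] at this
    omega

/-- number of cells in row r strictly above the diagonal value -/
def cnt (n : ℕ) (p : ℕ → ℕ → ℕ) (r : ℕ) : ℕ :=
  ((Finset.Icc (r + 1) n).filter (fun j => p r r < p r j)).card

/-- the jump position of row r (n+1 if no jump) -/
def sFrom (n : ℕ) (p : ℕ → ℕ → ℕ) (r : ℕ) : ℕ := n + 1 - cnt n p r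

lemma cnt_le (n : ℕ) (p : ℕ → ℕ → ℕ) (r : ℕ) : cnt n p r ≤ n - r := by
  have := Finset.card_filter_le (Finset.Icc (r + 1) n) (fun j => p r r < p r j)
  rw [Nat.card_Icc] at this
  unfold cnt; omega

lemma sFrom_bounds (n : ℕ) (p : ℕ → ℕ → ℕ) {r : ℕ} (h1 : 1 ≤ r) (h2 : r ≤ n) :
    r + 1 ≤ sFrom n p r ∧ sFrom n p r ≤ n + 1 := by
  have := cnt_le n p r
  unfold sFrom; omega

section FromPattern

variable {n : ℕ} {p : ℕ → ℕ → ℕ} (hp : Cond n p)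

include hp

lemma rowMono {i j j' : ℕ} (hi : 1 ≤ i) (hij : i ≤ j) (hjj' : j ≤ j') (hj'n : j' ≤ n) :
    p i j ≤ p i j' := by
  induction j', hjj' using Nat.le_induction with
  | base => exact le_rfl
  | succ m hm ih =>
      exact le_trans (ih (by omega)) (hp.2.1 i m hi (by omega) (by omega)).1

lemma twoValued {i j : ℕ} (hi : 1 ≤ i) (hij : i ≤ j) (hjn : j ≤ n) :
    p i j ≤ p i i + 1 := by
  rcases Nat.lt_or_ge i n with h | h
  · have h1 := (hp.2.2.2.1 i hi (by omega)).1
    have h2 := rowMono hp hi hij hjn le_rfl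
    omega
  · have h3 : p n n = 0 := hp.2.2.2.2
    have hji : j = i := by omega
    have hii : i = n := by omega
    rw [hji, hii, h3]
    omega

lemma sthr {i j : ℕ} (hi : 1 ≤ i) (hij : i ≤ j) (hjn : j ≤ n) :
    (p i i < p i j ↔ sFrom n p i ≤ j) := by
  rcases Nat.eq_or_lt_of_le hij with h | h
  · subst h
    have := sFrom_bounds n p hi hjn
    simp only [lt_irrefl, false_iff]
    omega
  · exact threshold (fun j => p i i < p i j)
      (fun j j' hj hjj' hj'u hPj =>
        lt_of_lt_of_le hPj (rowMono hp hi (by omega) hjj' hj'u)) h hjn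

lemma valForm {i j : ℕ} (hi : 1 ≤ i) (hij : i ≤ j) (hjn : j ≤ n) :
    p i j = p i i + (if sFrom n p i ≤ j then 1 else 0) := by
  have h1 := twoValued hp hi hij hjn
  have h2 := rowMono hp hi le_rfl hij hjn
  have h3 := sthr hp hi hij hjn
  split
  · next hs => have := h3.mpr hs; omega
  · next hs =>
      have : ¬ (p i i < p i j) := fun hlt => hs (h3.mp hlt)
      omega

lemma diagForm : ∀ i, 1 ≤ i → i ≤ n → p i i = aOf n (sFrom n p) i := by
  have key : ∀ d i, 1 ≤ i → i ≤ n → n - i = d → p i i = aOf n (sFrom n p) i := by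
    intro d
    induction d with
    | zero =>
        intro i hi hin hd
        have : i = n := by omega
        subst this
        unfold aOf
        rw [Finset.Ico_self, Finset.sum_empty, hp.2.2.2.2]
    | succ d ih =>
        intro i hi hin hd
        have hlt : i < n := by omega
        have hb := ih (i + 1) (by omega) (by omega) (by omega)
        rw [aOf_succ n _ hlt, ← hb]
        have hsb1 := sFrom_bounds n p (show 1 ≤ i+1 by omega) (show i+1 ≤ n by omega)
        have hsbi := sFrom_bounds n p hi (by omega)
        have hba : p (i+1) (i+1) ≤ p i i := (hp.2.1 i i hi le_rfl (by omega)).2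
        have hab : p i i ≤ p (i+1) (i+1) + 1 := by
          have h4 := (hp.2.2.2.1 i hi (by omega)).2
          have h5 := twoValued hp (show 1 ≤ i+1 by omega) (show i+1 ≤ n by omega) le_rfl
          omega
        -- claim 1 : if condition holds then p i i = p (i+1) (i+1) + 1
        have claim1 : sFrom n p (i+1) ≤ sFrom n p i → sFrom n p (i+1) ≤ n → p i i = p (i+1) (i+1) + 1 := by
          intro hc1 hc2
          by_contra hne
          have heq : p i i = p (i+1) (i+1) := by omega
          -- use GT at (i, s(i+1)-1)
          have hj0 : i + 1 ≤ sFrom n p (i+1) - 1 := by omega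
          have hj0n : (sFrom n p (i+1) - 1) + 1 ≤ n := by omega
          have hGT := (hp.2.1 i (sFrom n p (i+1) - 1) hi (by omega) hj0n).2
          have hsucc : sFrom n p (i+1) - 1 + 1 = sFrom n p (i+1) := by omega
          rw [hsucc] at hGT
          have hv1 : p (i+1) (sFrom n p (i+1)) = p (i+1) (i+1) + 1 := by
            rw [valForm hp (show 1 ≤ i+1 by omega) (by omega) hc2]
            rw [if_pos le_rfl]
          have hv2 : p i (sFrom n p (i+1) - 1) = p i i := by
            rw [valForm hp hi (by omega) (by omega)]
            rw [if_neg (by omega)]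
            omega
          rw [hv1, hv2, heq] at hGT
          omega
        -- claim 2 : if p i i = p (i+1) (i+1) + 1 then condition holds
        have claim2 : p i i = p (i+1) (i+1) + 1 → sFrom n p (i+1) ≤ sFrom n p i ∧ sFrom n p (i+1) ≤ n := by
          intro heq
          have h4 := (hp.2.2.2.1 i hi (by omega)).2
          have hv3 : p (i+1) n = p (i+1) (i+1) + (if sFrom n p (i+1) ≤ n then 1 else 0) :=
            valForm hp (by omega) (by omega) le_rfl
          have hc2 : sFrom n p (i+1) ≤ n := by
            by_contra hc
            rw [if_neg hc] at hv3
            omega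
          refine ⟨?_, hc2⟩
          by_contra hc1
          have hsi : sFrom n p i < sFrom n p (i+1) := by omega
          have hsin : sFrom n p i ≤ n := by omega
          have hcol := hp.2.2.1 i (sFrom n p i) hi (by omega) hsin
          have hv4 : p i (sFrom n p i) = p i i + 1 := by
            rw [valForm hp hi (by omega) hsin, if_pos le_rfl]
          have hv5 : p (i+1) (sFrom n p i) = p (i+1) (i+1) := by
            rw [valForm hp (show 1 ≤ i+1 by omega) (by omega) hsin, if_neg (by omega)]
            omega
          rw [hv4, hv5, heq] at hcol
          omega
        unfold ind
        by_cases hc : sFrom n p (i + 1) ≤ sFrom n p i ∧ sFrom n p (i + 1) ≤ n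
        · rw [if_pos hc]
          have := claim1 hc.1 hc.2
          omega
        · rw [if_neg hc]
          have : ¬ (p i i = p (i+1) (i+1) + 1) := fun h => hc (claim2 h)
          omega
  exact fun i hi hin => key (n - i) i hi hin rfl

lemma rightInv : pOf n (sFrom n p) = p := by
  funext i j
  unfold pOf
  split
  · next h =>
      obtain ⟨h1, h2, h3⟩ := h
      rw [← diagForm hp i h1 (by omega)]
      exact (valForm hp h1 h2 h3).symm
  · next h => exact (hp.1 i j h).symm

end FromPattern
open Finset

def sOf (n : ℕ) (σ : ∀ i : Fin n, Fin (n - i)) (r : ℕ) : ℕ :=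
  if h : 1 ≤ r ∧ r ≤ n then (σ ⟨r - 1, by omega⟩ : ℕ) + r + 1 else n + 1

lemma sOf_bounds (n : ℕ) (σ : ∀ i : Fin n, Fin (n - i)) :
    ∀ r, 1 ≤ r → r ≤ n → r + 1 ≤ sOf n σ r ∧ sOf n σ r ≤ n + 1 := by
  intro r h1 h2
  unfold sOf
  rw [dif_pos ⟨h1, h2⟩]
  have := (σ ⟨r - 1, by omega⟩).isLt
  simp only [Fin.val_mk] at this  -- this : σ .. < n - (r-1)
  omega

def toFunKB (n : ℕ) (p : {p : ℕ → ℕ → ℕ // Cond n p}) : ∀ i : Fin n, Fin (n - i) :=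
  fun i => ⟨n - 1 - i - cnt n p.1 (i + 1), by have := i.isLt; omega⟩

def invFunKB (n : ℕ) (σ : ∀ i : Fin n, Fin (n - i)) : {p : ℕ → ℕ → ℕ // Cond n p} :=
  ⟨pOf n (sOf n σ), pOf_cond n _ (sOf_bounds n σ)⟩

lemma pOf_congr (n : ℕ) {s s' : ℕ → ℕ} (h : ∀ r, 1 ≤ r → r ≤ n → s r = s' r)
    (i j : ℕ) : pOf n s i j = pOf n s' i j := by
  unfold pOf
  split
  · next ht =>
      obtain ⟨h1, h2, h3⟩ := ht
      have ha : aOf n s i = aOf n s' i := by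
        unfold aOf
        apply Finset.sum_congr rfl
        intro m hm
        rw [Finset.mem_Ico] at hm
        unfold ind
        rw [h m (by omega) (by omega), h (m + 1) (by omega) (by omega)]
      rw [ha, h i h1 (by omega)]
  · rfl

def equivKB (n : ℕ) : {p : ℕ → ℕ → ℕ // Cond n p} ≃ (∀ i : Fin n, Fin (n - i)) where
  toFun := toFunKB n
  invFun := invFunKB n
  left_inv := by
    intro p
    apply Subtype.ext
    funext i j
    show pOf n (sOf n (toFunKB n p)) i j = p.1 i j
    have hagree : ∀ r, 1 ≤ r → r ≤ n → sOf n (toFunKB n p) r = sFrom n p.1 r := by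
      intro r h1 h2
      unfold sOf
      rw [dif_pos ⟨h1, h2⟩]
      show (toFunKB n p ⟨r - 1, _⟩ : ℕ) + r + 1 = _
      unfold toFunKB
      simp only [Fin.val_mk]
      have hc := cnt_le n p.1 (r - 1 + 1)
      have hr : r - 1 + 1 = r := by omega
      rw [hr] at hc ⊢
      unfold sFrom
      omega
    rw [pOf_congr n hagree i j, rightInv p.2]
  right_inv := by
    intro σ
    funext i
    apply Fin.ext
    show n - 1 - (i : ℕ) - cnt n (pOf n (sOf n σ)) ((i : ℕ) + 1) = (σ i : ℕ)
    have hi := i.isLt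
    have hb := sOf_bounds n σ ((i : ℕ) + 1) (by omega) (by omega)
    have hc : cnt n (pOf n (sOf n σ)) ((i : ℕ) + 1) = n + 1 - sOf n σ ((i : ℕ) + 1) := by
      unfold cnt
      have hset : (Finset.Icc ((i : ℕ) + 1 + 1) n).filter
          (fun j => pOf n (sOf n σ) ((i : ℕ) + 1) ((i : ℕ) + 1) < pOf n (sOf n σ) ((i : ℕ) + 1) j)
          = Finset.Icc (sOf n σ ((i : ℕ) + 1)) n := by
        ext x
        rw [Finset.mem_filter, Finset.mem_Icc, Finset.mem_Icc]
        constructor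
        · rintro ⟨⟨hx1, hx2⟩, hlt⟩
          refine ⟨?_, hx2⟩
          rw [pOf_eq n _ (by omega) le_rfl (by omega),
              pOf_eq n _ (by omega) (by omega) hx2, if_neg (by omega)] at hlt
          by_contra hsx
          rw [if_neg (by omega)] at hlt
          omega
        · rintro ⟨hx1, hx2⟩
          refine ⟨⟨by omega, hx2⟩, ?_⟩
          rw [pOf_eq n _ (by omega) le_rfl (by omega),
              pOf_eq n _ (by omega) (by omega) hx2, if_neg (by omega), if_pos hx1]
          omega
      rw [hset, Nat.card_Icc]
    have hσ : sOf n σ ((i : ℕ) + 1) = (σ i : ℕ) + (i : ℕ) + 2 := by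
      unfold sOf
      rw [dif_pos ⟨by omega, by omega⟩]
      have hkey : ∀ (h : (i : ℕ) + 1 - 1 < n), σ ⟨(i : ℕ) + 1 - 1, h⟩ = σ i := by
        intro h
        rfl
      rw [hkey]
      omega
    have hσlt := (σ i).isLt
    omega

lemma prod_succ_factorial (n : ℕ) : ∏ j ∈ Finset.range n, (j + 1) = n.factorial := by
  induction n with
  | zero => simp
  | succ m ih => rw [Finset.prod_range_succ, ih, Nat.factorial_succ]; ring

lemma card_cond (n : ℕ) : Nat.card {p : ℕ → ℕ → ℕ // Cond n p} = n.factorial := by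
  rw [Nat.card_congr (equivKB n), Nat.card_pi]
  have h1 : ∀ i : Fin n, Nat.card (Fin (n - (i : ℕ))) = n - (i : ℕ) := by
    intro i
    simp [Nat.card_eq_fintype_card]
  rw [Finset.prod_congr rfl (fun i _ => h1 i)]
  rw [Fin.prod_univ_eq_prod_range (fun i => n - i) n]
  have h2 : ∀ j ∈ Finset.range n, n - (n - 1 - j) = j + 1 := by
    intro j hj
    rw [Finset.mem_range] at hj
    omega
  calc ∏ j ∈ Finset.range n, (n - j)
      = ∏ j ∈ Finset.range n, (n - (n - 1 - j)) := (Finset.prod_range_reflect (fun j => n - j) n).symm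
    _ = ∏ j ∈ Finset.range n, (j + 1) := Finset.prod_congr rfl h2
    _ = n.factorial := prod_succ_factorial n

end KB

/-- The Kirillov–Berenstein set `𝒫_{k-1}`: triangular arrays `(p_{i,j})_{1 ≤ i ≤ j ≤ k-1}`
of nonnegative integers (encoded as `p : ℕ → ℕ → ℕ` vanishing outside the triangle)
satisfying the Gelfand–Tsetlin inequalities `p_{i,j+1} ≥ p_{i,j} ≥ p_{i+1,j+1}`,
together with: (1) `p_{i,j} - 1 ≤ p_{i+1,j}` for `i < j`;
(2) `p_{i,k-1} - 1 ≤ p_{i,i} ≤ p_{i+1,k-1}` for `i ≤ k-2`; (3) `p_{k-1,k-1} = 0`.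
This set has cardinality `(k-1)!`. -/
theorem KB_pattern_count (k : ℕ) (hk : 2 ≤ k) :
    Nat.card {p : ℕ → ℕ → ℕ //
      (∀ i j, ¬(1 ≤ i ∧ i ≤ j ∧ j ≤ k - 1) → p i j = 0) ∧
      (∀ i j, 1 ≤ i → i ≤ j → j + 1 ≤ k - 1 →
        p i j ≤ p i (j + 1) ∧ p (i + 1) (j + 1) ≤ p i j) ∧
      (∀ i j, 1 ≤ i → i < j → j ≤ k - 1 → p i j ≤ p (i + 1) j + 1) ∧
      (∀ i, 1 ≤ i → i ≤ k - 2 → p i (k - 1) ≤ p i i + 1 ∧ p i i ≤ p (i + 1) (k - 1)) ∧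
      p (k - 1) (k - 1) = 0} = (k - 1).factorial := by
  have h : k - 2 = k - 1 - 1 := by omega
  rw [h]
  exact KB.card_cond (k - 1)
end

section
/- (Winding-number constraint for cylindric path families) Let $m, n, k \geq 1$ with $k \le n$. In the cylindric network $\widehat{\Lambda}_{m,n}$ (the wrap-around of the infinite grid network with $n$ horizontal lines on a cylinder and $m$ columns of crossing vertices), suppose $\mathcal{F}$ is a non-intersecting family of highway paths from sources $B = \{b_k < \cdots < b_1\} \subseteq [n]$ to sinks $C = \{c_k < \cdots < c_1\} \subseteq [n]$ with total winding number $d$. Then the path starting at source $b_a$ must end at sink $c_{((a+d-1) \bmod k) + 1}$; that is, the winding number together with the source and sink sets determines the connection pattern, which is the cyclic rotation by $d$. -/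
/-- A highway path on the cylindric network `Λ̂_{m,n}` is encoded by its starting row
`b : ZMod n` and the set `D ⊆ [m]` of interior columns in which it makes its (unique)
vertical step.  `entryRow n b D g` is the row of the path at the horizontal gap `g`
(just before interior column `g`, for `0 ≤ g ≤ m`): the start row minus the number of
descents already made. -/
def entryRow (n : ℕ) (b : ZMod n) {m : ℕ} (D : Finset (Fin m)) (g : ℕ) : ZMod n :=
  b - (((D.filter fun t : Fin m => (t : ℕ) < g).card : ℕ) : ZMod n)

/-- The winding number of the highway path `(b, D)`: the number of vertical steps that
cross the distinguished chord, i.e. descents from row `0` to row `n - 1`. -/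
def windingNum (n : ℕ) (b : ZMod n) {m : ℕ} (D : Finset (Fin m)) : ℕ :=
  (D.filter fun t : Fin m => entryRow n b D (t : ℕ) = 0).card

/-
Lift every path to the universal cover `ℤ` of the cylinder, where its row at gap `g` is `b` minus
the number of descents before `g`; adding `n` times the number of chord crossings so far brings it
back into `[0, n)`, so the lifted end of the path from `b a` is `c (σ a) - n wₐ`. Two lifted paths
move relative to each other by at most one per gap and, being edge-disjoint, never differ by a
multiple of `n`; so if `b a' < b a` their lifted ends still differ by an amount in `(0, n)`. As `c`
is decreasing, this makes `F a = k wₐ + σ a` strictly increasing with spread less than `k`, i.e.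
`F a = F 0 + a`. Summing over `a` gives `F 0 = ∑ w`, and reducing mod `k` gives the rotation.
-/

open Finset

lemma card_filter_val_lt_succ {m : ℕ} (s : Finset (Fin m)) (g : ℕ) :
    #(s.filter fun t : Fin m => (t : ℕ) < g + 1)
      = #(s.filter fun t : Fin m => (t : ℕ) < g) + #(s.filter fun t : Fin m => (t : ℕ) = g) := by
  rw [← card_union_of_disjoint (disjoint_filter.2 fun _ _ h => h.ne), ← filter_or]
  simp only [Nat.lt_succ_iff_lt_or_eq]

lemma card_filter_val_eq_le_one {m : ℕ} (s : Finset (Fin m)) (g : ℕ) :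
    #(s.filter fun t : Fin m => (t : ℕ) = g) ≤ 1 :=
  card_le_one.2 fun _ ht _ hu => Fin.ext ((mem_filter.1 ht).2.trans (mem_filter.1 hu).2.symm)

lemma card_filter_val_lt_of_le {m g : ℕ} (s : Finset (Fin m)) (hg : m ≤ g) :
    #(s.filter fun t : Fin m => (t : ℕ) < g) = #s := by
  rw [filter_true_of_mem fun t _ => t.isLt.trans_le hg]

lemma mem_Ioo_of_step_le_one {f : ℕ → ℤ} {lo hi : ℤ} {N : ℕ} (h₀ : f 0 ∈ Set.Ioo lo hi)
    (hstep : ∀ g < N, |f (g + 1) - f g| ≤ 1) (havoid : ∀ g ≤ N, f g ≠ lo ∧ f g ≠ hi) :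
    ∀ g ≤ N, f g ∈ Set.Ioo lo hi := by
  intro g hg
  induction g with
  | zero => exact h₀
  | succ g ih =>
    have := ih (by omega)
    have := abs_le.1 (hstep g hg)
    have := havoid (g + 1) hg
    simp only [Set.mem_Ioo] at *
    omega

lemma eq_add_of_strictMono_of_mem_Ico {k : ℕ} {F : Fin k → ℤ} {x₀ : ℤ} (hF : StrictMono F)
    (hmem : ∀ a, F a ∈ Ico x₀ (x₀ + k)) (a : Fin k) : F a = x₀ + a := by
  have hcard : #(Ico x₀ (x₀ + k)) = k := by simp
  have htrans : StrictMono fun a : Fin k => x₀ + a := fun _ _ h => by simpa using h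
  rw [orderEmbOfFin_unique hcard hmem hF,
    ← orderEmbOfFin_unique hcard (f := fun a : Fin k => x₀ + a) (fun a => by simp) htrans]

section HighwayPath

variable {m n : ℕ}

lemma entryRow_natCast (B : ℕ) (D : Finset (Fin m)) (g : ℕ) :
    entryRow n (B : ZMod n) D g
      = (((B : ℤ) - #(D.filter fun t : Fin m => (t : ℕ) < g) : ℤ) : ZMod n) := by
  simp [entryRow]

lemma card_filter_crossings_val_eq (b : ZMod n) (D : Finset (Fin m)) (g : ℕ) :
    #((D.filter fun t : Fin m => entryRow n b D t = 0).filter fun t : Fin m => (t : ℕ) = g)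
      = if entryRow n b D g = 0 then #(D.filter fun t : Fin m => (t : ℕ) = g) else 0 := by
  rw [filter_filter]
  split_ifs with h
  · exact congrArg card (filter_congr fun t _ => ⟨fun h' => h'.2, fun ht => ⟨ht ▸ h, ht⟩⟩)
  · exact card_eq_zero.2 (filter_eq_empty_iff.2 fun t _ ht => h (ht.2 ▸ ht.1))

lemma sub_card_add_mul_card_crossings_mem_Ico {B : ℕ} (hB : B < n) (D : Finset (Fin m))
    (g : ℕ) :
    (B : ℤ) - #(D.filter fun t : Fin m => (t : ℕ) < g)
        + n * #((D.filter fun t : Fin m => entryRow n (B : ZMod n) D t = 0).filter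
            fun t : Fin m => (t : ℕ) < g) ∈ Set.Ico 0 (n : ℤ) := by
  induction g with
  | zero => simpa using hB
  | succ g ih =>
    rw [card_filter_val_lt_succ, card_filter_val_lt_succ, card_filter_crossings_val_eq]
    set Z := (B : ℤ) - #(D.filter fun t : Fin m => (t : ℕ) < g)
        + n * #((D.filter fun t : Fin m => entryRow n (B : ZMod n) D t = 0).filter
            fun t : Fin m => (t : ℕ) < g) with hZ
    have hrow : entryRow n (B : ZMod n) D g = (Z : ZMod n) := by
      simp [hZ, entryRow_natCast]
    have hδ := card_filter_val_eq_le_one D g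
    rw [Set.mem_Ico] at ih ⊢
    split_ifs with h
    · -- a descent from row `0` is a crossing: `Z = 0` becomes `n - 1`
      have hZ0 : Z = 0 := Int.eq_zero_of_dvd_of_nonneg_of_lt ih.1 ih.2
        ((ZMod.intCast_zmod_eq_zero_iff_dvd Z n).1 (hrow ▸ h))
      interval_cases #(D.filter fun t : Fin m => (t : ℕ) = g) <;> push_cast <;> constructor <;>
        linarith
    · have hZ0 : Z ≠ 0 := fun hZ0 => h (by simp [hrow, hZ0])
      rw [add_zero]
      interval_cases #(D.filter fun t : Fin m => (t : ℕ) = g) <;> push_cast <;> constructor <;>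
        omega

lemma natCast_eq_sub_card_add_mul_windingNum {B C : ℕ} (hB : B < n) (hC : C < n)
    (D : Finset (Fin m)) (hend : (B : ZMod n) - (#D : ZMod n) = (C : ZMod n)) :
    (C : ℤ) = B - #D + n * windingNum n (B : ZMod n) D := by
  have hmem : (B - #D + n * windingNum n (B : ZMod n) D : ℤ) ∈ Set.Ico 0 (n : ℤ) := by
    simpa only [windingNum, card_filter_val_lt_of_le _ le_rfl] using
      sub_card_add_mul_card_crossings_mem_Ico hB D m
  have hcast : ((B - #D + n * windingNum n (B : ZMod n) D : ℤ) : ZMod n) = ((C : ℤ) : ZMod n) :=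
    by simpa using hend
  rw [ZMod.intCast_eq_intCast_iff', Int.emod_eq_of_lt hmem.1 hmem.2,
    Int.emod_eq_of_lt (Int.natCast_nonneg C) (by exact_mod_cast hC)] at hcast
  exact hcast.symm

lemma sub_card_sub_sub_card_mem_Ioo {B B' : ℕ} {D D' : Finset (Fin m)}
    (hBB' : (B - B' : ℤ) ∈ Set.Ioo 0 (n : ℤ))
    (hdisj : ∀ g ≤ m, entryRow n (B : ZMod n) D g ≠ entryRow n (B' : ZMod n) D' g) :
    ((B : ℤ) - #D) - ((B' : ℤ) - #D') ∈ Set.Ioo 0 (n : ℤ) := by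
  have key := mem_Ioo_of_step_le_one (N := m)
    (f := fun g => ((B : ℤ) - #(D.filter fun t : Fin m => (t : ℕ) < g))
      - ((B' : ℤ) - #(D'.filter fun t : Fin m => (t : ℕ) < g))) (lo := 0) (hi := n)
    (by simpa using hBB') (fun g _ => ?_) (fun g hg => ?_) m le_rfl
  · simpa only [card_filter_val_lt_of_le _ le_rfl] using key
  · rw [card_filter_val_lt_succ, card_filter_val_lt_succ, abs_le]
    have := card_filter_val_eq_le_one D g
    have := card_filter_val_eq_le_one D' g
    constructor <;> omega
  · have hne := sub_ne_zero.2 (hdisj g hg)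
    rw [entryRow_natCast, entryRow_natCast, ← Int.cast_sub] at hne
    constructor <;> rintro h <;> simp [h] at hne

end HighwayPath

lemma lift_sub_mem_Ioo_of_strictAnti {n k : ℕ} {c : Fin k → Fin n} (hc : StrictAnti c)
    {x x' : Fin k} {w w' : ℤ}
    (h : (n * w' - (c x' : ℕ)) - (n * w - (c x : ℕ)) ∈ Set.Ioo 0 (n : ℤ)) :
    (k * w' + x') - (k * w + x) ∈ Set.Ioo 0 (k : ℤ) := by
  have hcx := (c x).isLt
  have hcx' := (c x').isLt
  rw [Set.mem_Ioo] at h ⊢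
  obtain ⟨h0, h1⟩ := h
  have hu : w' = w ∨ w' = w + 1 := by
    have : -1 < w' - w := by nlinarith
    have : w' - w < 2 := by nlinarith
    omega
  have := x.isLt
  have := x'.isLt
  rcases hu with rfl | rfl
  · have : x < x' := hc.lt_iff_gt.1 (Fin.lt_def.2 (by omega))
    rw [Fin.lt_def] at this
    omega
  · have : x' < x := hc.lt_iff_gt.1 (Fin.lt_def.2 (by nlinarith))
    rw [Fin.lt_def] at this
    constructor <;> nlinarith

lemma val_eq_add_sum_mod_of_lift_sub_mem_Ioo {k : ℕ} (σ : Equiv.Perm (Fin k)) (w : Fin k → ℕ)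
    (h : ∀ a a' : Fin k, a < a' →
      ((k : ℤ) * w a' + (σ a' : ℕ)) - (k * w a + (σ a : ℕ)) ∈ Set.Ioo 0 (k : ℤ))
    (a : Fin k) : (σ a : ℕ) = ((a : ℕ) + ∑ x, w x) % k := by
  set F : Fin k → ℤ := fun x => k * w x + (σ x : ℕ) with hF
  have hmono : StrictMono F := fun x x' hx => sub_pos.1 (h x x' hx).1
  have hk : 0 < k := a.pos
  set a₀ : Fin k := ⟨0, hk⟩
  have ha₀ : ∀ x, a₀ ≤ x := fun x => Fin.le_def.2 (Nat.zero_le x)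
  have htrans : ∀ x, F x = F a₀ + x := eq_add_of_strictMono_of_mem_Ico hmono fun x => by
    rw [mem_Ico]
    refine ⟨hmono.monotone (ha₀ x), ?_⟩
    rcases (ha₀ x).eq_or_lt with hx | hx
    · rw [← hx]; omega
    · linarith [(h a₀ x hx).2]
  have hsum : F a₀ = ∑ x, (w x : ℤ) := by
    have h₁ : ∑ x, F x = k * F a₀ + ∑ x : Fin k, (x : ℤ) := by
      rw [sum_congr rfl fun x _ => htrans x, sum_add_distrib, sum_const, card_univ,
        Fintype.card_fin, nsmul_eq_mul]
    have h₂ : ∑ x, F x = k * ∑ x, (w x : ℤ) + ∑ x : Fin k, (x : ℤ) := by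
      simp [hF, sum_add_distrib, mul_sum, Equiv.sum_comp σ (fun x : Fin k => ((x : ℕ) : ℤ))]
    exact mul_left_cancel₀ (by positivity : (k : ℤ) ≠ 0) (add_right_cancel (h₁.symm.trans h₂))
  zify
  rw [← hsum, add_comm, ← htrans, hF, Int.mul_add_emod_self_left,
    Int.emod_eq_of_lt (by positivity) (by exact_mod_cast (σ a).isLt)]

theorem cylindric_winding_matching_general (m n k : ℕ)
    (b c : Fin k → Fin n) (hb : StrictAnti b) (hc : StrictAnti c)
    (D : Fin k → Finset (Fin m)) (σ : Equiv.Perm (Fin k))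
    -- the path starting at `b a` ends at the row of sink `c (σ a)`
    (hend : ∀ a : Fin k,
      (((b a : ℕ) : ZMod n)) - (((D a).card : ℕ) : ZMod n) = (((c (σ a) : ℕ)) : ZMod n))
    -- no two paths share a horizontal edge
    (hdisjH : ∀ a a' : Fin k, a ≠ a' → ∀ g : ℕ, g ≤ m →
      entryRow n ((b a : ℕ) : ZMod n) (D a) g ≠ entryRow n ((b a' : ℕ) : ZMod n) (D a') g) :
    ∀ a : Fin k, (σ a : ℕ) =
      ((a : ℕ) + ∑ a' : Fin k, windingNum n ((b a' : ℕ) : ZMod n) (D a')) % k := by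
  have hlift : ∀ a, ((c (σ a) : ℕ) : ℤ)
      = (b a : ℕ) - #(D a) + n * windingNum n ((b a : ℕ) : ZMod n) (D a) := fun a =>
    natCast_eq_sub_card_add_mul_windingNum (b a).isLt (c (σ a)).isLt (D a) (hend a)
  have hsources : ∀ a a' : Fin k, a < a' → ((b a : ℕ) - (b a' : ℕ) : ℤ) ∈ Set.Ioo 0 (n : ℤ) :=
    fun a a' haa' => by
      have := (b a).isLt
      have := Fin.lt_def.1 (hb haa')
      constructor <;> omega
  refine val_eq_add_sum_mod_of_lift_sub_mem_Ioo σ _ fun a a' haa' =>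
    lift_sub_mem_Ioo_of_strictAnti hc ?_
  rw [hlift, hlift]
  convert sub_card_sub_sub_card_mem_Ioo (hsources a a' haa') (hdisjH a a' haa'.ne) using 1
  ring

/-- Winding-number constraint for non-intersecting families of highway paths on the
cylinder: if `k` pairwise edge-disjoint highway paths connect the sources
`B = {b_k < ⋯ < b_1}` to the sinks `C = {c_k < ⋯ < c_1}` (0-indexed: `a ↦ b a`,
strictly decreasing), and the family has total winding number `d`, then the path
starting at source `b a` ends at sink `c ((a + d) mod k)`: the connection pattern is
the cyclic rotation by `d`. -/
theorem cylindric_winding_matching (m n k : ℕ) [NeZero n]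
    (hk : 1 ≤ k) (hkn : k ≤ n)
    (b c : Fin k → Fin n) (hb : StrictAnti b) (hc : StrictAnti c)
    (D : Fin k → Finset (Fin m)) (σ : Equiv.Perm (Fin k))
    -- the path starting at `b a` ends at the row of sink `c (σ a)`
    (hend : ∀ a : Fin k,
      (((b a : ℕ) : ZMod n)) - (((D a).card : ℕ) : ZMod n) = (((c (σ a) : ℕ)) : ZMod n))
    -- no two paths share a horizontal edge
    (hdisjH : ∀ a a' : Fin k, a ≠ a' → ∀ g : ℕ, g ≤ m →
      entryRow n ((b a : ℕ) : ZMod n) (D a) g ≠ entryRow n ((b a' : ℕ) : ZMod n) (D a') g)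
    -- no two paths share a vertical edge
    (hdisjV : ∀ a a' : Fin k, a ≠ a' → ∀ t : Fin m, t ∈ D a → t ∈ D a' →
      entryRow n ((b a : ℕ) : ZMod n) (D a) (t : ℕ)
        ≠ entryRow n ((b a' : ℕ) : ZMod n) (D a') (t : ℕ)) :
    ∀ a : Fin k, (σ a : ℕ) =
      ((a : ℕ) + ∑ a' : Fin k, windingNum n ((b a' : ℕ) : ZMod n) (D a')) % k :=
  cylindric_winding_matching_general m n k b c hb hc D σ hend hdisjH
end
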